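/- arXiv:1704.04534 — 4 statements merged into one kernel-verified Lean document; each statement's English description precedes it below -/
import Mathlib

section
/- Let u be an admissible function. Then 2∫_Ω (1+x)·u_{xyy}·(u_{yyyy} + u_{yyzz} + u_{zzzz}) dΩ = ‖u_{yyy}‖² + ‖u_{yyz}‖² + ‖u_{yzz}‖². -/
open MeasureTheory Set intervalIntegral

/-- Partial derivative in the first variable (`x`). -/
noncomputable def px (u : ℝ → ℝ → ℝ → ℝ) : ℝ → ℝ → ℝ → ℝ :=
  fun x y z => deriv (fun x' => u x' y z) x

/-- Partial derivative in the second variable (`y`). -/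
noncomputable def py (u : ℝ → ℝ → ℝ → ℝ) : ℝ → ℝ → ℝ → ℝ :=
  fun x y z => deriv (fun y' => u x y' z) y

/-- Partial derivative in the third variable (`z`). -/
noncomputable def pz (u : ℝ → ℝ → ℝ → ℝ) : ℝ → ℝ → ℝ → ℝ :=
  fun x y z => deriv (fun z' => u x y z') z

/-- The domain `Ω = (0,L) × ℝ²`. -/
def Omega (L : ℝ) : Set (ℝ × ℝ × ℝ) := Set.Ioo 0 L ×ˢ (Set.univ : Set (ℝ × ℝ))

/-- `u` is admissible: it is `C^∞`, vanishes for `y² + z² ≥ R²` for some `R > 0`, and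
satisfies the boundary conditions `u(0,y,z) = u(L,y,z) = u_x(L,y,z) = 0`. -/
def Admissible (L : ℝ) (u : ℝ → ℝ → ℝ → ℝ) : Prop :=
  ContDiff ℝ (⊤ : ℕ∞) (fun p : ℝ × ℝ × ℝ => u p.1 p.2.1 p.2.2) ∧
  (∃ R > 0, ∀ x y z : ℝ, R ^ 2 ≤ y ^ 2 + z ^ 2 → u x y z = 0) ∧
  (∀ y z : ℝ, u 0 y z = 0) ∧ (∀ y z : ℝ, u L y z = 0) ∧ (∀ y z : ℝ, px u L y z = 0)

abbrev Unc (u : ℝ → ℝ → ℝ → ℝ) : ℝ × ℝ × ℝ → ℝ := fun p => u p.1 p.2.1 p.2.2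

def Nice (u : ℝ → ℝ → ℝ → ℝ) : Prop :=
  ContDiff ℝ (⊤ : ℕ∞) (Unc u) ∧ ∃ M > (0:ℝ), ∀ x y z : ℝ, M ^ 2 ≤ y ^ 2 + z ^ 2 → u x y z = 0


theorem hasDerivAt_sliceX {u : ℝ → ℝ → ℝ → ℝ} (hu : Differentiable ℝ (Unc u)) (x y z : ℝ) :
    HasDerivAt (fun t => u t y z) (fderiv ℝ (Unc u) (x, y, z) (1, 0, 0)) x := by
  have h1 : HasDerivAt (fun t : ℝ => ((t, y, z) : ℝ × ℝ × ℝ)) (1, 0, 0) x := by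
    have := HasDerivAt.prodMk (hasDerivAt_id x) (hasDerivAt_const x ((y, z) : ℝ × ℝ))
    simpa [Prod.mk_zero_zero] using this
  exact (hu (x, y, z)).hasFDerivAt.comp_hasDerivAt x h1

theorem hasDerivAt_sliceY {u : ℝ → ℝ → ℝ → ℝ} (hu : Differentiable ℝ (Unc u)) (x y z : ℝ) :
    HasDerivAt (fun t => u x t z) (fderiv ℝ (Unc u) (x, y, z) (0, 1, 0)) y := by
  have h1 : HasDerivAt (fun t : ℝ => ((x, t, z) : ℝ × ℝ × ℝ)) (0, 1, 0) y := by
    have := HasDerivAt.prodMk (hasDerivAt_const y x) (HasDerivAt.prodMk (hasDerivAt_id y) (hasDerivAt_const y z))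
    simpa using this
  exact (hu (x, y, z)).hasFDerivAt.comp_hasDerivAt y h1

theorem hasDerivAt_sliceZ {u : ℝ → ℝ → ℝ → ℝ} (hu : Differentiable ℝ (Unc u)) (x y z : ℝ) :
    HasDerivAt (fun t => u x y t) (fderiv ℝ (Unc u) (x, y, z) (0, 0, 1)) z := by
  have h1 : HasDerivAt (fun t : ℝ => ((x, y, t) : ℝ × ℝ × ℝ)) (0, 0, 1) z := by
    have := HasDerivAt.prodMk (hasDerivAt_const z x) (HasDerivAt.prodMk (hasDerivAt_const z y) (hasDerivAt_id z))
    simpa using this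
  exact (hu (x, y, z)).hasFDerivAt.comp_hasDerivAt z h1

theorem px_eq {u : ℝ → ℝ → ℝ → ℝ} (hu : Differentiable ℝ (Unc u)) (x y z : ℝ) :
    px u x y z = fderiv ℝ (Unc u) (x, y, z) (1, 0, 0) := (hasDerivAt_sliceX hu x y z).deriv
theorem py_eq {u : ℝ → ℝ → ℝ → ℝ} (hu : Differentiable ℝ (Unc u)) (x y z : ℝ) :
    py u x y z = fderiv ℝ (Unc u) (x, y, z) (0, 1, 0) := (hasDerivAt_sliceY hu x y z).deriv
theorem pz_eq {u : ℝ → ℝ → ℝ → ℝ} (hu : Differentiable ℝ (Unc u)) (x y z : ℝ) :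
    pz u x y z = fderiv ℝ (Unc u) (x, y, z) (0, 0, 1) := (hasDerivAt_sliceZ hu x y z).deriv

theorem contDiff_fderiv_apply {V : ℝ × ℝ × ℝ → ℝ} (hu : ContDiff ℝ (⊤ : ℕ∞) V) (v : ℝ × ℝ × ℝ) :
    ContDiff ℝ (⊤ : ℕ∞) (fun p => fderiv ℝ V p v) :=
  (hu.fderiv_right (by simp)).clm_apply contDiff_const


theorem fderiv_apply_comm {V : ℝ × ℝ × ℝ → ℝ} (hu : ContDiff ℝ (⊤ : ℕ∞) V) (p v w : ℝ × ℝ × ℝ) :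
    fderiv ℝ (fun q => fderiv ℝ V q v) p w = fderiv ℝ (fun q => fderiv ℝ V q w) p v := by
  have hd : Differentiable ℝ (fderiv ℝ V) := (hu.fderiv_right (m := 1) (by exact WithTop.coe_le_coe.mpr le_top)).differentiable one_ne_zero
  have e : ∀ a : ℝ × ℝ × ℝ, fderiv ℝ (fun q => fderiv ℝ V q a) p
      = (fderiv ℝ (fderiv ℝ V) p).flip a := by
    intro a
    rw [fderiv_clm_apply (hd p) (differentiableAt_const a)]
    simp
  rw [e v, e w]
  have hsymm := second_derivative_symmetric (f := V) (f' := fderiv ℝ V)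
    (f'' := fderiv ℝ (fderiv ℝ V) p) (x := p)
    (fun y => ((hu.differentiable (by simp)) y).hasFDerivAt) (hd p).hasFDerivAt
  simpa using (hsymm w v)

theorem Nice.diff {u : ℝ → ℝ → ℝ → ℝ} (hu : Nice u) : Differentiable ℝ (Unc u) :=
  hu.1.differentiable (by simp)

theorem Unc_px {u : ℝ → ℝ → ℝ → ℝ} (hu : Nice u) :
    Unc (px u) = fun p => fderiv ℝ (Unc u) p (1, 0, 0) := by
  funext p; exact px_eq hu.diff p.1 p.2.1 p.2.2
theorem Unc_py {u : ℝ → ℝ → ℝ → ℝ} (hu : Nice u) :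
    Unc (py u) = fun p => fderiv ℝ (Unc u) p (0, 1, 0) := by
  funext p; exact py_eq hu.diff p.1 p.2.1 p.2.2
theorem Unc_pz {u : ℝ → ℝ → ℝ → ℝ} (hu : Nice u) :
    Unc (pz u) = fun p => fderiv ℝ (Unc u) p (0, 0, 1) := by
  funext p; exact pz_eq hu.diff p.1 p.2.1 p.2.2

theorem Nice.px {u : ℝ → ℝ → ℝ → ℝ} (hu : Nice u) : Nice (px u) := by
  obtain ⟨hs, M, hM, hsupp⟩ := hu
  refine ⟨by rw [Unc_px ⟨hs, M, hM, hsupp⟩]; exact contDiff_fderiv_apply hs _, M, hM, ?_⟩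
  intro x y z h
  have h2 : (fun x' => u x' y z) = fun _ => (0:ℝ) := funext fun x' => hsupp x' y z h
  show deriv (fun x' => u x' y z) x = 0
  rw [h2]; exact deriv_const x 0

theorem Nice.py {u : ℝ → ℝ → ℝ → ℝ} (hu : Nice u) : Nice (py u) := by
  obtain ⟨hs, M, hM, hsupp⟩ := hu
  refine ⟨by rw [Unc_py ⟨hs, M, hM, hsupp⟩]; exact contDiff_fderiv_apply hs _, M + 1,
    by linarith, ?_⟩
  intro x y z h
  have hy : M ^ 2 < y ^ 2 + z ^ 2 := lt_of_lt_of_le (by nlinarith) h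
  have hopen : IsOpen {t : ℝ | M ^ 2 < t ^ 2 + z ^ 2} :=
    isOpen_lt continuous_const (by continuity)
  have hev : (fun y' => u x y' z) =ᶠ[nhds y] (fun _ => (0:ℝ)) := by
    filter_upwards [hopen.mem_nhds hy] with t ht
    exact hsupp x t z (le_of_lt ht)
  show deriv (fun y' => u x y' z) y = 0
  rw [hev.deriv_eq]; exact deriv_const y 0

theorem Nice.pz {u : ℝ → ℝ → ℝ → ℝ} (hu : Nice u) : Nice (pz u) := by
  obtain ⟨hs, M, hM, hsupp⟩ := hu
  refine ⟨by rw [Unc_pz ⟨hs, M, hM, hsupp⟩]; exact contDiff_fderiv_apply hs _, M + 1,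
    by linarith, ?_⟩
  intro x y z h
  have hz : M ^ 2 < y ^ 2 + z ^ 2 := lt_of_lt_of_le (by nlinarith) h
  have hopen : IsOpen {t : ℝ | M ^ 2 < y ^ 2 + t ^ 2} :=
    isOpen_lt continuous_const (by continuity)
  have hev : (fun z' => u x y z') =ᶠ[nhds z] (fun _ => (0:ℝ)) := by
    filter_upwards [hopen.mem_nhds hz] with t ht
    exact hsupp x y t (le_of_lt ht)
  show deriv (fun z' => u x y z') z = 0
  rw [hev.deriv_eq]; exact deriv_const z 0

-- curried Clairaut
theorem px_py_comm {u : ℝ → ℝ → ℝ → ℝ} (hu : Nice u) : px (py u) = py (px u) := by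
  funext x y z
  rw [px_eq hu.py.diff, py_eq hu.px.diff, Unc_py hu, Unc_px hu]
  exact fderiv_apply_comm hu.1 _ _ _

theorem px_pz_comm {u : ℝ → ℝ → ℝ → ℝ} (hu : Nice u) : px (pz u) = pz (px u) := by
  funext x y z
  rw [px_eq hu.pz.diff, pz_eq hu.px.diff, Unc_pz hu, Unc_px hu]
  exact fderiv_apply_comm hu.1 _ _ _

theorem py_pz_comm {u : ℝ → ℝ → ℝ → ℝ} (hu : Nice u) : py (pz u) = pz (py u) := by
  funext x y z
  rw [py_eq hu.pz.diff, pz_eq hu.py.diff, Unc_pz hu, Unc_py hu]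
  exact fderiv_apply_comm hu.1 _ _ _


theorem Nice.hasDerivAt_x {u : ℝ → ℝ → ℝ → ℝ} (hu : Nice u) (x y z : ℝ) :
    HasDerivAt (fun t => u t y z) (_root_.px u x y z) x := by
  rw [px_eq hu.diff]; exact hasDerivAt_sliceX hu.diff x y z

theorem Nice.hasDerivAt_y {u : ℝ → ℝ → ℝ → ℝ} (hu : Nice u) (x y z : ℝ) :
    HasDerivAt (fun t => u x t z) (_root_.py u x y z) y := by
  rw [py_eq hu.diff]; exact hasDerivAt_sliceY hu.diff x y z

theorem Nice.hasDerivAt_z {u : ℝ → ℝ → ℝ → ℝ} (hu : Nice u) (x y z : ℝ) :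
    HasDerivAt (fun t => u x y t) (_root_.pz u x y z) z := by
  rw [pz_eq hu.diff]; exact hasDerivAt_sliceZ hu.diff x y z

theorem Nice.contX {u : ℝ → ℝ → ℝ → ℝ} (hu : Nice u) (y z : ℝ) :
    Continuous fun t => u t y z := by
  have h : Continuous fun t : ℝ => Unc u (t, y, z) := hu.1.continuous.comp (by continuity)
  exact h

theorem Nice.contY {u : ℝ → ℝ → ℝ → ℝ} (hu : Nice u) (x z : ℝ) :
    Continuous fun t => u x t z := by
  have h : Continuous fun t : ℝ => Unc u (x, t, z) := hu.1.continuous.comp (by continuity)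
  exact h

theorem Nice.contZ {u : ℝ → ℝ → ℝ → ℝ} (hu : Nice u) (x y : ℝ) :
    Continuous fun t => u x y t := by
  have h : Continuous fun t : ℝ => Unc u (x, y, t) := hu.1.continuous.comp (by continuity)
  exact h

theorem Nice.sq {u : ℝ → ℝ → ℝ → ℝ} (hu : Nice u) :
    Nice (fun x y z => u x y z ^ 2) := by
  obtain ⟨hs, M, hM, hsupp⟩ := hu
  exact ⟨hs.pow 2, M, hM, fun x y z h => by
    show u x y z ^ 2 = 0; rw [hsupp x y z h]; ring⟩

theorem px_sq {w : ℝ → ℝ → ℝ → ℝ} (hw : Nice w) :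
    px (fun x y z => w x y z ^ 2) = fun x y z => 2 * w x y z * px w x y z := by
  funext x y z
  show deriv (fun t => w t y z ^ 2) x = _
  have h : HasDerivAt (fun t => w t y z ^ 2) _ x := (hw.hasDerivAt_x x y z).pow 2
  simpa using h.deriv

theorem boundary_py {u : ℝ → ℝ → ℝ → ℝ} {x0 : ℝ} (h : ∀ y z, u x0 y z = 0) :
    ∀ y z, py u x0 y z = 0 := by
  intro y z
  show deriv (fun t => u x0 t z) y = 0
  rw [show (fun t => u x0 t z) = fun _ => (0:ℝ) from funext fun t => h t z]
  exact deriv_const y 0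

theorem boundary_pz {u : ℝ → ℝ → ℝ → ℝ} {x0 : ℝ} (h : ∀ y z, u x0 y z = 0) :
    ∀ y z, pz u x0 y z = 0 := by
  intro y z
  show deriv (fun t => u x0 y t) z = 0
  rw [show (fun t => u x0 y t) = fun _ => (0:ℝ) from funext fun t => h y t]
  exact deriv_const z 0

theorem supp_slice_y {u : ℝ → ℝ → ℝ → ℝ} {M : ℝ} (hM : 0 < M)
    (hs : ∀ x y z : ℝ, M ^ 2 ≤ y ^ 2 + z ^ 2 → u x y z = 0) (x z : ℝ) :
    ∀ t, M ≤ |t| → u x t z = 0 := by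
  intro t ht
  apply hs
  have : M ^ 2 ≤ t ^ 2 := by rw [← sq_abs t]; exact pow_le_pow_left₀ hM.le ht 2
  nlinarith [sq_nonneg z]

theorem supp_slice_z {u : ℝ → ℝ → ℝ → ℝ} {M : ℝ} (hM : 0 < M)
    (hs : ∀ x y z : ℝ, M ^ 2 ≤ y ^ 2 + z ^ 2 → u x y z = 0) (x y : ℝ) :
    ∀ t, M ≤ |t| → u x y t = 0 := by
  intro t ht
  apply hs
  have : M ^ 2 ≤ t ^ 2 := by rw [← sq_abs t]; exact pow_le_pow_left₀ hM.le ht 2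
  nlinarith [sq_nonneg y]

/-- integral of a derivative of a compactly supported C¹ function over ℝ is zero -/
theorem integral_hasDerivAt_eq_zero (h h' : ℝ → ℝ) (hh : ∀ t, HasDerivAt h (h' t) t)
    (hc : Continuous h') (M : ℝ) (hs : ∀ t, M ≤ |t| → h t = 0) :
    ∫ t, h' t = 0 := by
  set a : ℝ := -(|M| + 1) with ha
  set b : ℝ := |M| + 1 with hb
  have hab : a ≤ b := neg_le_self (by positivity)
  have hvan : ∀ t, t ∉ Ioc a b → h' t = 0 := by
    intro t ht
    have habs : M < |t| := by
      simp only [mem_Ioc, not_and_or, not_lt, not_le] at ht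
      rcases ht with ht | ht
      · calc M ≤ |M| := le_abs_self M
          _ < |t| := by rw [abs_of_nonpos (by linarith : t ≤ 0)]; linarith
      · calc M ≤ |M| := le_abs_self M
          _ < |t| := by rw [abs_of_nonneg (by linarith : 0 ≤ t)]; linarith
    have hev : h =ᶠ[nhds t] (fun _ => (0:ℝ)) := by
      have hopen : IsOpen {s : ℝ | M < |s|} := isOpen_lt continuous_const continuous_abs
      filter_upwards [hopen.mem_nhds habs] with s hsx
      exact hs s (le_of_lt hsx)
    have : deriv h t = 0 := by rw [hev.deriv_eq]; exact deriv_const t 0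
    rw [← (hh t).deriv]; exact this
  rw [← setIntegral_eq_integral_of_forall_compl_eq_zero hvan,
    ← intervalIntegral.integral_of_le hab,
    integral_eq_sub_of_hasDerivAt (fun x _ => hh x) (hc.intervalIntegrable a b)]
  have hb' : M ≤ |b| := by
    rw [abs_of_nonneg (by positivity : (0:ℝ) ≤ b)]
    exact (le_abs_self M).trans (by linarith)
  have ha' : M ≤ |a| := by
    rw [ha, abs_neg, abs_of_nonneg (by positivity : (0:ℝ) ≤ b)]
    exact (le_abs_self M).trans (by linarith)
  rw [hs b hb', hs a ha', sub_zero]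

theorem integrable_of_compact_support (f : ℝ → ℝ) (hf : Continuous f) (M : ℝ)
    (hs : ∀ t, M ≤ |t| → f t = 0) : Integrable f := by
  apply hf.integrable_of_hasCompactSupport
  apply HasCompactSupport.intro (isCompact_Icc (a := -(|M|+1)) (b := |M|+1))
  intro t ht
  simp only [mem_Icc, not_and_or, not_le] at ht
  apply hs
  rcases ht with ht | ht
  · have h2 : |M| + 1 ≤ |t| := le_trans (by linarith) (neg_le_abs t)
    linarith [le_abs_self M]
  · have h2 : |M| + 1 ≤ |t| := le_trans (le_of_lt ht) (le_abs_self t)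
    linarith [le_abs_self M]

/-- 1D integration by parts on ℝ with compact support -/
theorem ibp_line (f g f' g' : ℝ → ℝ) (hf : ∀ t, HasDerivAt f (f' t) t)
    (hg : ∀ t, HasDerivAt g (g' t) t) (hf'c : Continuous f') (hg'c : Continuous g')
    (M : ℝ) (hfs : ∀ t, M ≤ |t| → f t = 0) (hgs : ∀ t, M ≤ |t| → g t = 0) :
    ∫ t, f t * g' t = -∫ t, f' t * g t := by
  have hfc : Continuous f :=
    Differentiable.continuous (fun t => (hf t).differentiableAt)
  have hgc : Continuous g :=
    Differentiable.continuous (fun t => (hg t).differentiableAt)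
  have i1 : Integrable (fun t => f' t * g t) :=
    integrable_of_compact_support _ (hf'c.mul hgc) M (fun t ht => by rw [hgs t ht, mul_zero])
  have i2 : Integrable (fun t => f t * g' t) :=
    integrable_of_compact_support _ (hfc.mul hg'c) M (fun t ht => by rw [hfs t ht, zero_mul])
  have key : ∫ t, (f' t * g t + f t * g' t) = 0 := by
    apply integral_hasDerivAt_eq_zero (fun t => f t * g t) _ (fun t => (hf t).mul (hg t))
      ((hf'c.mul hgc).add (hfc.mul hg'c)) M
    intro t ht; rw [hfs t ht, zero_mul]
  rw [integral_add i1 i2] at key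
  linarith

/-- x-direction integration by parts on (0, L) with vanishing boundary values -/
theorem ibp_x {L : ℝ} (hL : 0 < L) (w w' : ℝ → ℝ) (hw : ∀ t, HasDerivAt w (w' t) t)
    (hw'c : Continuous w') (h0 : w 0 = 0) (hLL : w L = 0) :
    ∫ x in Ioo 0 L, (1 + x) * w' x = -∫ x in Ioo 0 L, w x := by
  have hwc : Continuous w := Differentiable.continuous (fun t => (hw t).differentiableAt)
  have hF : ∀ x, HasDerivAt (fun t => (1 + t) * w t) (1 * w x + (1 + x) * w' x) x :=
    fun x => (((hasDerivAt_id x).const_add 1)).mul (hw x)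
  have hFc : Continuous fun x => 1 * w x + (1 + x) * w' x := by
    apply Continuous.add (continuous_const.mul hwc)
      (((continuous_const.add continuous_id)).mul hw'c)
  have key : ∫ x in Ioo 0 L, (1 * w x + (1 + x) * w' x) = 0 := by
    rw [← integral_Ioc_eq_integral_Ioo, ← intervalIntegral.integral_of_le hL.le,
      integral_eq_sub_of_hasDerivAt (fun x _ => hF x) (hFc.intervalIntegrable 0 L)]
    simp [h0, hLL]
  have iw : IntegrableOn w (Ioo 0 L) :=
    (hwc.integrableOn_Icc (a := 0) (b := L)).mono_set Ioo_subset_Icc_self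
  have iF : IntegrableOn (fun x => 1 * w x + (1 + x) * w' x) (Ioo 0 L) :=
    (hFc.integrableOn_Icc (a := 0) (b := L)).mono_set Ioo_subset_Icc_self
  have i2 : IntegrableOn (fun x => (1 + x) * w' x) (Ioo 0 L) :=
    ((((continuous_const.add continuous_id)).mul hw'c).integrableOn_Icc
      (a := 0) (b := L)).mono_set Ioo_subset_Icc_self
  have i1 : IntegrableOn (fun x => 1 * w x) (Ioo 0 L) := by
    simpa using iw
  rw [integral_add i1 i2] at key
  have : ∫ x in Ioo 0 L, 1 * w x = ∫ x in Ioo 0 L, w x := by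
    congr 1; funext x; ring
  linarith [this ▸ key]

theorem omega_eq (L : ℝ) (h : ℝ × ℝ × ℝ → ℝ) :
    (∫ p in Omega L, h p) =
      ∫ p, h p ∂(((volume : Measure ℝ).restrict (Ioo 0 L)).prod (volume : Measure (ℝ × ℝ))) := by
  rw [Measure.restrict_prod_eq_prod_univ, ← Measure.volume_eq_prod]
  rfl

theorem support_big {u : ℝ → ℝ → ℝ → ℝ} {M : ℝ}
    (hs : ∀ x y z : ℝ, M ^ 2 ≤ y ^ 2 + z ^ 2 → u x y z = 0)
    (x : ℝ) (q : ℝ × ℝ) (hq : |M| + 1 ≤ ‖q‖) : u x q.1 q.2 = 0 := by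
  apply hs
  rw [Prod.norm_def] at hq
  have hM : M ^ 2 ≤ (|M| + 1) ^ 2 := by nlinarith [le_abs_self M, neg_abs_le M, abs_nonneg M]
  rcases le_total ‖q.1‖ ‖q.2‖ with hc | hc
  · have h1 : |M| + 1 ≤ |q.2| := by rwa [max_eq_right hc] at hq
    have h2 : (|M| + 1) ^ 2 ≤ q.2 ^ 2 := by
      rw [← sq_abs q.2]; exact pow_le_pow_left₀ (by positivity) h1 2
    linarith [sq_nonneg q.1]
  · have h1 : |M| + 1 ≤ |q.1| := by rwa [max_eq_left hc] at hq
    have h2 : (|M| + 1) ^ 2 ≤ q.1 ^ 2 := by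
      rw [← sq_abs q.1]; exact pow_le_pow_left₀ (by positivity) h1 2
    linarith [sq_nonneg q.2]

theorem integrable_cyl {u : ℝ → ℝ → ℝ → ℝ} (hc : Continuous (Unc u)) {M : ℝ}
    (hs : ∀ x y z : ℝ, M ^ 2 ≤ y ^ 2 + z ^ 2 → u x y z = 0) (L : ℝ) :
    Integrable (Unc u)
      (((volume : Measure ℝ).restrict (Ioo 0 L)).prod (volume : Measure (ℝ × ℝ))) := by
  rw [Measure.restrict_prod_eq_prod_univ, ← Measure.volume_eq_prod]
  set Ω : Set (ℝ × ℝ × ℝ) := Ioo 0 L ×ˢ (univ : Set (ℝ × ℝ)) with hΩ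
  have hΩm : MeasurableSet Ω := measurableSet_Ioo.prod MeasurableSet.univ
  set K : Set (ℝ × ℝ × ℝ) := Icc 0 L ×ˢ Metric.closedBall (0 : ℝ × ℝ) (|M| + 1) with hK
  have hKc : IsCompact K := isCompact_Icc.prod (isCompact_closedBall _ _)
  have h1 : IntegrableOn (Unc u) K := hc.continuousOn.integrableOn_compact hKc
  have h2 : IntegrableOn (Unc u) (Ω \ K) := by
    rw [integrableOn_congr_fun (g := fun _ => (0:ℝ)) ?_ (hΩm.diff hKc.measurableSet)]
    · exact integrableOn_zero
    · rintro ⟨x, q⟩ ⟨⟨hx, -⟩, hpK⟩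
      have hq : q ∉ Metric.closedBall (0 : ℝ × ℝ) (|M| + 1) := by
        intro hqK
        exact hpK ⟨⟨le_of_lt hx.1, le_of_lt hx.2⟩, hqK⟩
      rw [Metric.mem_closedBall, dist_zero_right, not_le] at hq
      exact support_big hs x q (le_of_lt hq)
  have : IntegrableOn (Unc u) ((Ω ∩ K) ∪ (Ω \ K)) :=
    (h1.mono_set inter_subset_right).union h2
  rwa [inter_union_diff] at this

theorem integrable_slice {u : ℝ → ℝ → ℝ → ℝ} (hc : Continuous (Unc u)) {M : ℝ}
    (hs : ∀ x y z : ℝ, M ^ 2 ≤ y ^ 2 + z ^ 2 → u x y z = 0) (x : ℝ) :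
    Integrable (fun q : ℝ × ℝ => u x q.1 q.2) := by
  apply Continuous.integrable_of_hasCompactSupport
  · exact hc.comp (Continuous.prodMk continuous_const continuous_id)
  · apply HasCompactSupport.intro (isCompact_closedBall (0 : ℝ × ℝ) (|M| + 1))
    intro q hq
    rw [Metric.mem_closedBall, dist_zero_right, not_le] at hq
    exact support_big hs x q (le_of_lt hq)

theorem fubX (L : ℝ) {u : ℝ → ℝ → ℝ → ℝ} (hc : Continuous (Unc u)) {M : ℝ}
    (hs : ∀ x y z : ℝ, M ^ 2 ≤ y ^ 2 + z ^ 2 → u x y z = 0) :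
    (∫ p in Omega L, Unc u p) = ∫ q : ℝ × ℝ, ∫ x in Ioo 0 L, u x q.1 q.2 := by
  rw [omega_eq, integral_prod_symm _ (integrable_cyl hc hs L)]

theorem fubY (L : ℝ) {u : ℝ → ℝ → ℝ → ℝ} (hc : Continuous (Unc u)) {M : ℝ}
    (hs : ∀ x y z : ℝ, M ^ 2 ≤ y ^ 2 + z ^ 2 → u x y z = 0) :
    (∫ p in Omega L, Unc u p) = ∫ x in Ioo 0 L, ∫ z, ∫ y, u x y z := by
  rw [omega_eq, integral_prod _ (integrable_cyl hc hs L)]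
  congr 1
  funext x
  exact integral_prod_symm _ (integrable_slice hc hs x)

theorem fubZ (L : ℝ) {u : ℝ → ℝ → ℝ → ℝ} (hc : Continuous (Unc u)) {M : ℝ}
    (hs : ∀ x y z : ℝ, M ^ 2 ≤ y ^ 2 + z ^ 2 → u x y z = 0) :
    (∫ p in Omega L, Unc u p) = ∫ x in Ioo 0 L, ∫ y, ∫ z, u x y z := by
  rw [omega_eq, integral_prod _ (integrable_cyl hc hs L)]
  congr 1
  funext x
  exact integral_prod _ (integrable_slice hc hs x)


theorem integrableOmega (L : ℝ) {h : ℝ → ℝ → ℝ → ℝ} (hc : Continuous (Unc h)) {M : ℝ}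
    (hs : ∀ x y z : ℝ, M ^ 2 ≤ y ^ 2 + z ^ 2 → h x y z = 0) :
    Integrable (Unc h) (volume.restrict (Omega L)) := by
  have := integrable_cyl hc hs L
  rwa [Measure.restrict_prod_eq_prod_univ, ← Measure.volume_eq_prod] at this

theorem omega_congr_y (L : ℝ) {h g : ℝ → ℝ → ℝ → ℝ}
    (hch : Continuous (Unc h)) {Mh : ℝ} (hsh : ∀ x y z, Mh ^ 2 ≤ y ^ 2 + z ^ 2 → h x y z = 0)
    (hcg : Continuous (Unc g)) {Mg : ℝ} (hsg : ∀ x y z, Mg ^ 2 ≤ y ^ 2 + z ^ 2 → g x y z = 0)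
    (hyp : ∀ x z, (∫ y, h x y z) = ∫ y, g x y z) :
    (∫ p in Omega L, Unc h p) = ∫ p in Omega L, Unc g p := by
  rw [fubY L hch hsh, fubY L hcg hsg]
  congr 1; funext x; congr 1; funext z; exact hyp x z

theorem omega_congr_z (L : ℝ) {h g : ℝ → ℝ → ℝ → ℝ}
    (hch : Continuous (Unc h)) {Mh : ℝ} (hsh : ∀ x y z, Mh ^ 2 ≤ y ^ 2 + z ^ 2 → h x y z = 0)
    (hcg : Continuous (Unc g)) {Mg : ℝ} (hsg : ∀ x y z, Mg ^ 2 ≤ y ^ 2 + z ^ 2 → g x y z = 0)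
    (hyp : ∀ x y, (∫ z, h x y z) = ∫ z, g x y z) :
    (∫ p in Omega L, Unc h p) = ∫ p in Omega L, Unc g p := by
  rw [fubZ L hch hsh, fubZ L hcg hsg]
  congr 1; funext x; congr 1; funext y; exact hyp x y


theorem omega_ibp_y (L : ℝ) {a b : ℝ → ℝ → ℝ → ℝ} (ha : Nice a) (hb : Nice b) :
    (∫ p in Omega L, Unc (fun x y z => (1 + x) * a x y z * py b x y z) p)
      = ∫ p in Omega L, Unc (fun x y z => -((1 + x) * py a x y z * b x y z)) p := by
  obtain ⟨Ma, hMa, hsa⟩ := ha.2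
  obtain ⟨Mb, hMb, hsb⟩ := hb.2
  apply omega_congr_y L
    (((continuous_const.add continuous_fst).mul ha.1.continuous).mul hb.py.1.continuous)
    (fun x y z hM => by rw [hsa x y z hM, mul_zero, zero_mul])
    ((((continuous_const.add continuous_fst).mul ha.py.1.continuous).mul hb.1.continuous).neg)
    (fun x y z hM => by rw [hsb x y z hM, mul_zero, neg_zero])
  intro x z
  have key := ibp_line (fun t => (1 + x) * a x t z) (fun t => b x t z)
    (fun t => (1 + x) * py a x t z) (fun t => py b x t z)
    (fun t => (ha.hasDerivAt_y x t z).const_mul (1 + x))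
    (fun t => hb.hasDerivAt_y x t z)
    (continuous_const.mul (ha.py.contY x z)) (hb.py.contY x z)
    (max Ma Mb)
    (fun t ht => by
      show (1 + x) * a x t z = 0
      rw [supp_slice_y hMa hsa x z t (le_trans (le_max_left _ _) ht), mul_zero])
    (fun t ht => supp_slice_y hMb hsb x z t (le_trans (le_max_right _ _) ht))
  rw [key, ← MeasureTheory.integral_neg]

theorem omega_ibp_z (L : ℝ) {a b : ℝ → ℝ → ℝ → ℝ} (ha : Nice a) (hb : Nice b) :
    (∫ p in Omega L, Unc (fun x y z => (1 + x) * a x y z * pz b x y z) p)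
      = ∫ p in Omega L, Unc (fun x y z => -((1 + x) * pz a x y z * b x y z)) p := by
  obtain ⟨Ma, hMa, hsa⟩ := ha.2
  obtain ⟨Mb, hMb, hsb⟩ := hb.2
  apply omega_congr_z L
    (((continuous_const.add continuous_fst).mul ha.1.continuous).mul hb.pz.1.continuous)
    (fun x y z hM => by rw [hsa x y z hM, mul_zero, zero_mul])
    ((((continuous_const.add continuous_fst).mul ha.pz.1.continuous).mul hb.1.continuous).neg)
    (fun x y z hM => by rw [hsb x y z hM, mul_zero, neg_zero])
  intro x y
  have key := ibp_line (fun t => (1 + x) * a x y t) (fun t => b x y t)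
    (fun t => (1 + x) * pz a x y t) (fun t => pz b x y t)
    (fun t => (ha.hasDerivAt_z x y t).const_mul (1 + x))
    (fun t => hb.hasDerivAt_z x y t)
    (continuous_const.mul (ha.pz.contZ x y)) (hb.pz.contZ x y)
    (max Ma Mb)
    (fun t ht => by
      show (1 + x) * a x y t = 0
      rw [supp_slice_z hMa hsa x y t (le_trans (le_max_left _ _) ht), mul_zero])
    (fun t ht => supp_slice_z hMb hsb x y t (le_trans (le_max_right _ _) ht))
  rw [key, ← MeasureTheory.integral_neg]

theorem omega_ibp_x {L : ℝ} (hL : 0 < L) {q : ℝ → ℝ → ℝ → ℝ} (hq : Nice q)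
    (hb0 : ∀ y z, q 0 y z = 0) (hbL : ∀ y z, q L y z = 0) :
    (∫ p in Omega L, Unc (fun x y z => (1 + x) * px q x y z) p)
      = -∫ p in Omega L, Unc q p := by
  obtain ⟨Mq, hMq, hsq⟩ := hq.2
  obtain ⟨Mp, hMp, hsp⟩ := hq.px.2
  rw [fubX L ((continuous_const.add continuous_fst).mul hq.px.1.continuous)
      (fun x y z hM => by show (1 + x) * px q x y z = 0; rw [hsp x y z hM, mul_zero]),
    fubX L hq.1.continuous hsq, ← MeasureTheory.integral_neg]
  congr 1; funext qq
  exact ibp_x hL (fun t => q t qq.1 qq.2) (fun t => px q t qq.1 qq.2)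
    (fun t => hq.hasDerivAt_x t qq.1 qq.2) (hq.px.contX qq.1 qq.2)
    (hb0 qq.1 qq.2) (hbL qq.1 qq.2)

/-- Identity for the term `J₄` in Estimate VI of the paper. -/
theorem estimateVI_J4_identity (L : ℝ) (hL : 0 < L) (u : ℝ → ℝ → ℝ → ℝ)
    (hu : Admissible L u) :
    2 * ∫ p in Omega L, (1 + p.1) * px (py (py u)) p.1 p.2.1 p.2.2 *
        (py (py (py (py u))) p.1 p.2.1 p.2.2 + py (py (pz (pz u))) p.1 p.2.1 p.2.2 +
          pz (pz (pz (pz u))) p.1 p.2.1 p.2.2) =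
      (∫ p in Omega L, (py (py (py u)) p.1 p.2.1 p.2.2) ^ 2) +
        (∫ p in Omega L, (py (py (pz u)) p.1 p.2.1 p.2.2) ^ 2) +
        (∫ p in Omega L, (py (pz (pz u)) p.1 p.2.1 p.2.2) ^ 2) := by

  obtain ⟨hsm, hsupp, hu0, huL, -⟩ := hu
  have n0 : Nice u := ⟨hsm, hsupp⟩
  have n_yy : Nice (py (py u)) := n0.py.py
  have nA : Nice (px (py (py u))) := n_yy.px
  have n_xy : Nice (px (py u)) := n0.py.px
  have n_w1 : Nice (py (py (py u))) := n0.py.py.py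
  have n_w2 : Nice (py (py (pz u))) := n0.pz.py.py
  have n_w3 : Nice (py (pz (pz u))) := n0.pz.pz.py
  have nB1 : Nice (py (py (py (py u)))) := n0.py.py.py.py
  have nB2 : Nice (py (py (pz (pz u)))) := n0.pz.pz.py.py
  have nB3 : Nice (pz (pz (pz (pz u)))) := n0.pz.pz.pz.pz
  obtain ⟨MA, hMA, hsA⟩ := nA.2
  have bd1_0 : ∀ y z, py (py (py u)) 0 y z = 0 := boundary_py (boundary_py (boundary_py hu0))
  have bd1_L : ∀ y z, py (py (py u)) L y z = 0 := boundary_py (boundary_py (boundary_py huL))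
  have bd2_0 : ∀ y z, py (py (pz u)) 0 y z = 0 := boundary_py (boundary_py (boundary_pz hu0))
  have bd2_L : ∀ y z, py (py (pz u)) L y z = 0 := boundary_py (boundary_py (boundary_pz huL))
  have bd3_0 : ∀ y z, py (pz (pz u)) 0 y z = 0 := boundary_py (boundary_pz (boundary_pz hu0))
  have bd3_L : ∀ y z, py (pz (pz u)) L y z = 0 := boundary_py (boundary_pz (boundary_pz huL))
  -- T1 : the first term
  have T1 : (∫ p in Omega L, Unc (fun x y z => (1 + x) * px (py (py u)) x y z * py (py (py (py u))) x y z) p) = (1/2) * (∫ p in Omega L, Unc (fun x y z => py (py (py u)) x y z ^ 2) p) := by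
    rw [omega_ibp_y L nA n_w1]
    have e : (fun x y z => -((1 + x) * py (px (py (py u))) x y z * py (py (py u)) x y z))
        = fun x y z => (-(1/2) : ℝ) * ((1 + x) * px (fun x y z => py (py (py u)) x y z ^ 2) x y z) := by
      funext x y z
      rw [← px_py_comm n_yy]
      simp only [px_sq n_w1]
      ring
    rw [e]
    have e2 : (∫ p in Omega L, Unc (fun x y z => (-(1/2) : ℝ) * ((1 + x) * px (fun x y z => py (py (py u)) x y z ^ 2) x y z)) p)
        = (-(1/2) : ℝ) * ∫ p in Omega L, Unc (fun x y z => (1 + x) * px (fun x y z => py (py (py u)) x y z ^ 2) x y z) p :=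
      integral_const_mul _ _
    rw [e2, omega_ibp_x hL n_w1.sq
      (fun y z => by show py (py (py u)) 0 y z ^ 2 = 0; rw [bd1_0 y z]; ring)
      (fun y z => by show py (py (py u)) L y z ^ 2 = 0; rw [bd1_L y z]; ring)]
    ring
  -- T2 : the second term
  have T2 : (∫ p in Omega L, Unc (fun x y z => (1 + x) * px (py (py u)) x y z * py (py (pz (pz u))) x y z) p) = (1/2) * (∫ p in Omega L, Unc (fun x y z => py (py (pz u)) x y z ^ 2) p) := by
    have eB2 : py (py (pz (pz u))) = pz (py (py (pz u))) := by
      rw [py_pz_comm n0.pz, py_pz_comm n0.pz.py]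
    have ef : (fun x y z => (1 + x) * px (py (py u)) x y z * py (py (pz (pz u))) x y z) = fun x y z => (1 + x) * px (py (py u)) x y z * pz (py (py (pz u))) x y z := by
      rw [eB2]
    rw [ef, omega_ibp_z L nA n_w2]
    have e : (fun x y z => -((1 + x) * pz (px (py (py u))) x y z * py (py (pz u)) x y z))
        = fun x y z => (-(1/2) : ℝ) * ((1 + x) * px (fun x y z => py (py (pz u)) x y z ^ 2) x y z) := by
      funext x y z
      rw [← px_pz_comm n_yy, ← py_pz_comm n0.py, ← py_pz_comm n0]
      simp only [px_sq n_w2]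
      ring
    rw [e]
    have e2 : (∫ p in Omega L, Unc (fun x y z => (-(1/2) : ℝ) * ((1 + x) * px (fun x y z => py (py (pz u)) x y z ^ 2) x y z)) p)
        = (-(1/2) : ℝ) * ∫ p in Omega L, Unc (fun x y z => (1 + x) * px (fun x y z => py (py (pz u)) x y z ^ 2) x y z) p :=
      integral_const_mul _ _
    rw [e2, omega_ibp_x hL n_w2.sq
      (fun y z => by show py (py (pz u)) 0 y z ^ 2 = 0; rw [bd2_0 y z]; ring)
      (fun y z => by show py (py (pz u)) L y z ^ 2 = 0; rw [bd2_L y z]; ring)]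
    ring
  -- T3 : the third term
  have T3 : (∫ p in Omega L, Unc (fun x y z => (1 + x) * px (py (py u)) x y z * pz (pz (pz (pz u))) x y z) p) = (1/2) * (∫ p in Omega L, Unc (fun x y z => py (pz (pz u)) x y z ^ 2) p) := by
    have e3a : (fun x y z => (1 + x) * px (py (py u)) x y z * pz (pz (pz (pz u))) x y z) = fun x y z => (1 + x) * pz (pz (pz (pz u))) x y z * py (px (py u)) x y z := by
      funext x y z
      rw [px_py_comm n0.py]
      ring
    rw [e3a, omega_ibp_y L nB3 n_xy]
    have neg1 : (∫ p in Omega L, Unc (fun x y z => -((1 + x) * py (pz (pz (pz (pz u)))) x y z * px (py u) x y z)) p) = -∫ p in Omega L, Unc (fun x y z => (1 + x) * py (pz (pz (pz (pz u)))) x y z * px (py u) x y z) p :=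
      MeasureTheory.integral_neg _
    rw [neg1]
    have e3b : (fun x y z => (1 + x) * py (pz (pz (pz (pz u)))) x y z * px (py u) x y z) = fun x y z => (1 + x) * px (py u) x y z * pz (py (pz (pz (pz u)))) x y z := by
      funext x y z
      rw [py_pz_comm n0.pz.pz.pz]
      ring
    rw [e3b, omega_ibp_z L n_xy n0.pz.pz.pz.py]
    have neg2 : (∫ p in Omega L, Unc (fun x y z => -((1 + x) * pz (px (py u)) x y z * py (pz (pz (pz u))) x y z)) p) = -∫ p in Omega L, Unc (fun x y z => (1 + x) * pz (px (py u)) x y z * py (pz (pz (pz u))) x y z) p :=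
      MeasureTheory.integral_neg _
    rw [neg2, neg_neg]
    have e3c : (fun x y z => (1 + x) * pz (px (py u)) x y z * py (pz (pz (pz u))) x y z) = fun x y z => (1 + x) * pz (px (py u)) x y z * pz (py (pz (pz u))) x y z := by
      funext x y z
      rw [py_pz_comm n0.pz.pz]
    rw [e3c, omega_ibp_z L n0.py.px.pz n_w3]
    have e3d : (fun x y z => -((1 + x) * pz (pz (px (py u))) x y z * py (pz (pz u)) x y z)) = fun x y z => (-(1/2) : ℝ) * ((1 + x) * px (fun x y z => py (pz (pz u)) x y z ^ 2) x y z) := by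
      funext x y z
      rw [← px_pz_comm n0.py, ← px_pz_comm n0.py.pz, ← py_pz_comm n0, ← py_pz_comm n0.pz]
      simp only [px_sq n_w3]
      ring
    rw [e3d]
    have e2 : (∫ p in Omega L, Unc (fun x y z => (-(1/2) : ℝ) * ((1 + x) * px (fun x y z => py (pz (pz u)) x y z ^ 2) x y z)) p)
        = (-(1/2) : ℝ) * ∫ p in Omega L, Unc (fun x y z => (1 + x) * px (fun x y z => py (pz (pz u)) x y z ^ 2) x y z) p :=
      integral_const_mul _ _
    rw [e2, omega_ibp_x hL n_w3.sq
      (fun y z => by show py (pz (pz u)) 0 y z ^ 2 = 0; rw [bd3_0 y z]; ring)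
      (fun y z => by show py (pz (pz u)) L y z ^ 2 = 0; rw [bd3_L y z]; ring)]
    ring
  -- splitting of the main integral
  have i1 : Integrable (Unc (fun x y z => (1 + x) * px (py (py u)) x y z * py (py (py (py u))) x y z)) (volume.restrict (Omega L)) :=
    integrableOmega L
      (((continuous_const.add continuous_fst).mul nA.1.continuous).mul nB1.1.continuous)
      (fun x y z h => by
        show (1 + x) * px (py (py u)) x y z * py (py (py (py u))) x y z = 0
        rw [hsA x y z h, mul_zero, zero_mul])
  have i2 : Integrable (Unc (fun x y z => (1 + x) * px (py (py u)) x y z * py (py (pz (pz u))) x y z)) (volume.restrict (Omega L)) :=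
    integrableOmega L
      (((continuous_const.add continuous_fst).mul nA.1.continuous).mul nB2.1.continuous)
      (fun x y z h => by
        show (1 + x) * px (py (py u)) x y z * py (py (pz (pz u))) x y z = 0
        rw [hsA x y z h, mul_zero, zero_mul])
  have i3 : Integrable (Unc (fun x y z => (1 + x) * px (py (py u)) x y z * pz (pz (pz (pz u))) x y z)) (volume.restrict (Omega L)) :=
    integrableOmega L
      (((continuous_const.add continuous_fst).mul nA.1.continuous).mul nB3.1.continuous)
      (fun x y z h => by
        show (1 + x) * px (py (py u)) x y z * pz (pz (pz (pz u))) x y z = 0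
        rw [hsA x y z h, mul_zero, zero_mul])
  have split : (∫ p in Omega L, Unc (fun x y z => (1 + x) * px (py (py u)) x y z * (py (py (py (py u))) x y z + py (py (pz (pz u))) x y z + pz (pz (pz (pz u))) x y z)) p)
      = (∫ p in Omega L, Unc (fun x y z => (1 + x) * px (py (py u)) x y z * py (py (py (py u))) x y z) p) + (∫ p in Omega L, Unc (fun x y z => (1 + x) * px (py (py u)) x y z * py (py (pz (pz u))) x y z) p) + (∫ p in Omega L, Unc (fun x y z => (1 + x) * px (py (py u)) x y z * pz (pz (pz (pz u))) x y z) p) := by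
    have e : (∫ p in Omega L, Unc (fun x y z => (1 + x) * px (py (py u)) x y z * (py (py (py (py u))) x y z + py (py (pz (pz u))) x y z + pz (pz (pz (pz u))) x y z)) p)
        = ∫ p in Omega L, (Unc (fun x y z => (1 + x) * px (py (py u)) x y z * py (py (py (py u))) x y z) p + Unc (fun x y z => (1 + x) * px (py (py u)) x y z * py (py (pz (pz u))) x y z) p + Unc (fun x y z => (1 + x) * px (py (py u)) x y z * pz (pz (pz (pz u))) x y z) p) :=
      integral_congr_ae (Filter.Eventually.of_forall fun p => by
        show (1 + p.1) * px (py (py u)) p.1 p.2.1 p.2.2 *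
            (py (py (py (py u))) p.1 p.2.1 p.2.2 + py (py (pz (pz u))) p.1 p.2.1 p.2.2 + pz (pz (pz (pz u))) p.1 p.2.1 p.2.2)
          = (1 + p.1) * px (py (py u)) p.1 p.2.1 p.2.2 * py (py (py (py u))) p.1 p.2.1 p.2.2
            + (1 + p.1) * px (py (py u)) p.1 p.2.1 p.2.2 * py (py (pz (pz u))) p.1 p.2.1 p.2.2
            + (1 + p.1) * px (py (py u)) p.1 p.2.1 p.2.2 * pz (pz (pz (pz u))) p.1 p.2.1 p.2.2
        ring)
    rw [e]
    refine (integral_add (i1.add i2) i3).trans ?_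
    have h12 := integral_add i1 i2
    exact congrArg (fun t => t + ∫ p in Omega L,
      Unc (fun x y z => (1 + x) * px (py (py u)) x y z * pz (pz (pz (pz u))) x y z) p) h12
  show 2 * (∫ p in Omega L, Unc (fun x y z => (1 + x) * px (py (py u)) x y z * (py (py (py (py u))) x y z + py (py (pz (pz u))) x y z + pz (pz (pz (pz u))) x y z)) p)
      = (∫ p in Omega L, Unc (fun x y z => py (py (py u)) x y z ^ 2) p) + (∫ p in Omega L, Unc (fun x y z => py (py (pz u)) x y z ^ 2) p) + (∫ p in Omega L, Unc (fun x y z => py (pz (pz u)) x y z ^ 2) p)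
  rw [split, T1, T2, T3]
  ring
end

section
/- Let u be an admissible function. Then 2∫_Ω (1+x)·u·u_x·u_{yyyy} dΩ = ∫_Ω ((1+x)u_x − u)·u_{yy}² dΩ − 2∫_Ω u_y²·u_{yy} dΩ − 2∫_Ω (1+x)·u_y²·u_{xyy} dΩ. -/
open MeasureTheory

namespace EstVI

/-- Uncurried version of a function of three real variables. -/
def UC (u : ℝ → ℝ → ℝ → ℝ) : ℝ × ℝ × ℝ → ℝ := fun p => u p.1 p.2.1 p.2.2

/-- `u` vanishes whenever `M ≤ |y|` or `M ≤ |z|`. -/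
def Q (M : ℝ) (u : ℝ → ℝ → ℝ → ℝ) : Prop := ∀ x y z : ℝ, M ≤ |y| ∨ M ≤ |z| → u x y z = 0

lemma Q.mono {M M' : ℝ} {u} (h : Q M u) (hle : M ≤ M') : Q M' u :=
  fun x y z hc => h x y z (hc.imp hle.trans hle.trans)

lemma Q.px' {M : ℝ} {u} (h : Q M u) : Q M (px u) := by
  intro x y z hc
  have : (fun x' => u x' y z) = fun _ => (0 : ℝ) := funext fun x' => h x' y z hc
  show deriv (fun x' => u x' y z) x = 0
  rw [this, deriv_const]

lemma Q.py' {M : ℝ} {u} (h : Q M u) : Q (M + 1) (py u) := by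
  intro x y z hc
  show deriv (fun y' => u x y' z) y = 0
  rcases hc with hc | hc
  · have hopen : IsOpen {t : ℝ | M < |t|} := isOpen_lt continuous_const continuous_abs
    have hmem : y ∈ {t : ℝ | M < |t|} := by simp only [Set.mem_setOf_eq]; linarith
    have hev : (fun y' => u x y' z) =ᶠ[nhds y] (fun _ => (0 : ℝ)) :=
      Filter.eventuallyEq_of_mem (hopen.mem_nhds hmem) fun y' hy' => h x y' z (Or.inl hy'.le)
    rw [hev.deriv_eq, deriv_const]
  · have : (fun y' => u x y' z) = fun _ => (0 : ℝ) :=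
      funext fun y' => h x y' z (Or.inr (by linarith))
    rw [this, deriv_const]

lemma diff_slice_y {u} (hu : ContDiff ℝ (⊤ : ℕ∞) (UC u)) (x z : ℝ) :
    Differentiable ℝ (fun y' => u x y' z) := by
  have h1 : Differentiable ℝ (fun y' : ℝ => ((x, y', z) : ℝ × ℝ × ℝ)) :=
    (differentiable_const x).prodMk (differentiable_id.prodMk (differentiable_const z))
  exact (hu.differentiable (by simp)).comp h1

lemma diff_slice_x {u} (hu : ContDiff ℝ (⊤ : ℕ∞) (UC u)) (y z : ℝ) :
    Differentiable ℝ (fun x' => u x' y z) := by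
  have h1 : Differentiable ℝ (fun x' : ℝ => ((x', y, z) : ℝ × ℝ × ℝ)) :=
    differentiable_id.prodMk ((differentiable_const y).prodMk (differentiable_const z))
  exact (hu.differentiable (by simp)).comp h1

lemma hasDerivAt_py {u} (hu : ContDiff ℝ (⊤ : ℕ∞) (UC u)) (x y z : ℝ) :
    HasDerivAt (fun y' => u x y' z) (py u x y z) y :=
  ((diff_slice_y hu x z) y).hasDerivAt

lemma hasDerivAt_px {u} (hu : ContDiff ℝ (⊤ : ℕ∞) (UC u)) (x y z : ℝ) :
    HasDerivAt (fun x' => u x' y z) (px u x y z) x :=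
  ((diff_slice_x hu y z) x).hasDerivAt

lemma hasDerivAt_fderiv_x {W : ℝ × ℝ × ℝ → ℝ} (hW : Differentiable ℝ W) (x y z : ℝ) :
    HasDerivAt (fun t => W (t, y, z)) (fderiv ℝ W (x, y, z) (1, 0, 0)) x := by
  have h : HasDerivAt (fun t : ℝ => ((t, y, z) : ℝ × ℝ × ℝ)) (1, 0, 0) x :=
    HasDerivAt.prodMk (hasDerivAt_id x) (HasDerivAt.prodMk (hasDerivAt_const x y) (hasDerivAt_const x z))
  exact (hW (x, y, z)).hasFDerivAt.comp_hasDerivAt x h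

lemma hasDerivAt_fderiv_y {W : ℝ × ℝ × ℝ → ℝ} (hW : Differentiable ℝ W) (x y z : ℝ) :
    HasDerivAt (fun t => W (x, t, z)) (fderiv ℝ W (x, y, z) (0, 1, 0)) y := by
  have h : HasDerivAt (fun t : ℝ => ((x, t, z) : ℝ × ℝ × ℝ)) (0, 1, 0) y :=
    HasDerivAt.prodMk (hasDerivAt_const y x) (HasDerivAt.prodMk (hasDerivAt_id y) (hasDerivAt_const y z))
  exact (hW (x, y, z)).hasFDerivAt.comp_hasDerivAt y h

lemma px_eq {u} (hu : ContDiff ℝ (⊤ : ℕ∞) (UC u)) (x y z : ℝ) :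
    px u x y z = fderiv ℝ (UC u) (x, y, z) (1, 0, 0) :=
  (hasDerivAt_fderiv_x (hu.differentiable (by simp)) x y z).deriv

lemma py_eq {u} (hu : ContDiff ℝ (⊤ : ℕ∞) (UC u)) (x y z : ℝ) :
    py u x y z = fderiv ℝ (UC u) (x, y, z) (0, 1, 0) :=
  (hasDerivAt_fderiv_y (hu.differentiable (by simp)) x y z).deriv

lemma contDiff_fderiv_apply {W : ℝ × ℝ × ℝ → ℝ} (hW : ContDiff ℝ (⊤ : ℕ∞) W) (v : ℝ × ℝ × ℝ) :
    ContDiff ℝ (⊤ : ℕ∞) fun p => fderiv ℝ W p v :=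
  (hW.fderiv_right (by simp)).clm_apply contDiff_const

lemma contDiff_px {u} (hu : ContDiff ℝ (⊤ : ℕ∞) (UC u)) : ContDiff ℝ (⊤ : ℕ∞) (UC (px u)) := by
  have h : UC (px u) = fun p => fderiv ℝ (UC u) p (1, 0, 0) :=
    funext fun p => px_eq hu p.1 p.2.1 p.2.2
  rw [h]; exact contDiff_fderiv_apply hu _

lemma contDiff_py {u} (hu : ContDiff ℝ (⊤ : ℕ∞) (UC u)) : ContDiff ℝ (⊤ : ℕ∞) (UC (py u)) := by
  have h : UC (py u) = fun p => fderiv ℝ (UC u) p (0, 1, 0) :=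
    funext fun p => py_eq hu p.1 p.2.1 p.2.2
  rw [h]; exact contDiff_fderiv_apply hu _

lemma fderiv_fderiv_apply {W : ℝ × ℝ × ℝ → ℝ} (hW : ContDiff ℝ (⊤ : ℕ∞) W) (q v w : ℝ × ℝ × ℝ) :
    fderiv ℝ (fun p => fderiv ℝ W p v) q w = fderiv ℝ (fderiv ℝ W) q w v := by
  have hfd : Differentiable ℝ (fderiv ℝ W) := (hW.fderiv_right (m := (⊤ : ℕ∞)) (by simp)).differentiable (by simp)
  have hc : HasFDerivAt (fun p => fderiv ℝ W p v)
      ((ContinuousLinearMap.apply ℝ ℝ v).comp (fderiv ℝ (fderiv ℝ W) q)) q :=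
    (ContinuousLinearMap.apply ℝ ℝ v).hasFDerivAt.comp q (hfd q).hasFDerivAt
  rw [hc.fderiv]; rfl

lemma clairaut {u} (hu : ContDiff ℝ (⊤ : ℕ∞) (UC u)) : py (px u) = px (py u) := by
  funext x y z
  have hW1 : ContDiff ℝ (⊤ : ℕ∞) (fun p : ℝ × ℝ × ℝ => fderiv ℝ (UC u) p (1, 0, 0)) :=
    contDiff_fderiv_apply hu _
  have hW2 : ContDiff ℝ (⊤ : ℕ∞) (fun p : ℝ × ℝ × ℝ => fderiv ℝ (UC u) p (0, 1, 0)) :=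
    contDiff_fderiv_apply hu _
  have hd1 : HasDerivAt (fun y' => px u x y' z)
      (fderiv ℝ (fun p : ℝ × ℝ × ℝ => fderiv ℝ (UC u) p (1, 0, 0)) (x, y, z) (0, 1, 0)) y := by
    rw [show (fun y' => px u x y' z) = fun y' => fderiv ℝ (UC u) (x, y', z) (1, 0, 0) from
      funext fun y' => px_eq hu x y' z]
    exact hasDerivAt_fderiv_y (hW1.differentiable (by simp)) x y z
  have hd2 : HasDerivAt (fun x' => py u x' y z)
      (fderiv ℝ (fun p : ℝ × ℝ × ℝ => fderiv ℝ (UC u) p (0, 1, 0)) (x, y, z) (1, 0, 0)) x := by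
    rw [show (fun x' => py u x' y z) = fun x' => fderiv ℝ (UC u) (x', y, z) (0, 1, 0) from
      funext fun x' => py_eq hu x' y z]
    exact hasDerivAt_fderiv_x (hW2.differentiable (by simp)) x y z
  exact hd1.deriv.trans ((fderiv_fderiv_apply hu _ _ _).trans
    (((hu.contDiffAt.isSymmSndFDerivAt (by rw [minSmoothness_of_isRCLikeNormedField]; exact WithTop.coe_le_coe.mpr (le_top (a := (2:ℕ∞))))) _ _).trans
      ((fderiv_fderiv_apply hu _ _ _).symm.trans hd2.deriv.symm)))

lemma not_mem_Icc_abs {M t : ℝ} (h : t ∉ Set.Icc (-M) M) : M ≤ |t| := by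
  rw [Set.mem_Icc, not_and_or] at h
  rcases h with h | h <;> push_neg at h
  · exact le_abs.mpr (Or.inr (by linarith))
  · exact le_abs.mpr (Or.inl (by linarith))

lemma integrableOn_Omega {L M : ℝ} {f : ℝ → ℝ → ℝ → ℝ} (hf : Continuous (UC f)) (hQ : Q M f) :
    IntegrableOn (UC f) (Omega L) := by
  set K : Set (ℝ × ℝ × ℝ) := Set.Icc 0 L ×ˢ (Set.Icc (-M) M ×ˢ Set.Icc (-M) M) with hK
  have hKc : IsCompact K := isCompact_Icc.prod (isCompact_Icc.prod isCompact_Icc)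
  have h1 : IntegrableOn (UC f) (Omega L ∩ K) :=
    (hf.continuousOn.integrableOn_compact hKc).mono_set Set.inter_subset_right
  have hmeas : MeasurableSet (Omega L \ K) :=
    (measurableSet_Ioo.prod MeasurableSet.univ).diff hKc.isClosed.measurableSet
  have h2 : IntegrableOn (UC f) (Omega L \ K) := by
    rw [integrableOn_congr_fun (g := fun _ => (0 : ℝ)) ?_ hmeas]
    · exact integrableOn_zero
    · rintro p ⟨hpΩ, hpK⟩
      have hnot : ¬(p.2.1 ∈ Set.Icc (-M) M ∧ p.2.2 ∈ Set.Icc (-M) M) := fun hc =>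
        hpK ⟨⟨hpΩ.1.1.le, hpΩ.1.2.le⟩, hc⟩
      rcases not_and_or.mp hnot with h | h
      · exact hQ p.1 p.2.1 p.2.2 (Or.inl (not_mem_Icc_abs h))
      · exact hQ p.1 p.2.1 p.2.2 (Or.inr (not_mem_Icc_abs h))
  rw [show Omega L = (Omega L ∩ K) ∪ (Omega L \ K) from (Set.inter_union_diff _ _).symm]
  exact h1.union h2

lemma measure_restrict_Omega (L : ℝ) :
    (volume : Measure (ℝ × ℝ × ℝ)).restrict (Omega L)
      = ((volume : Measure ℝ).restrict (Set.Ioo 0 L)).prod (volume : Measure (ℝ × ℝ)) := by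
  rw [Omega, show (volume : Measure (ℝ × ℝ × ℝ)) = (volume : Measure ℝ).prod
      (volume : Measure (ℝ × ℝ)) from (Measure.volume_eq_prod ℝ (ℝ × ℝ)),
    ← Measure.prod_restrict, Measure.restrict_univ]

lemma integral_py_zero {L M : ℝ} (hM : 0 ≤ M) {G : ℝ → ℝ → ℝ → ℝ}
    (hG : ContDiff ℝ (⊤ : ℕ∞) (UC G)) (hQ : Q M G) :
    ∫ p in Omega L, py G p.1 p.2.1 p.2.2 = 0 := by
  have hQ' : Q (M + 1) (py G) := hQ.py'
  have hGc : ContDiff ℝ (⊤ : ℕ∞) (UC (py G)) := contDiff_py hG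
  have hInt : IntegrableOn (UC (py G)) (Omega L) := integrableOn_Omega hGc.continuous hQ'
  have hInt2 : Integrable (fun p : ℝ × ℝ × ℝ => py G p.1 p.2.1 p.2.2)
      (((volume : Measure ℝ).restrict (Set.Ioo 0 L)).prod (volume : Measure (ℝ × ℝ))) := by
    rw [← measure_restrict_Omega]; exact hInt
  rw [show (∫ p in Omega L, py G p.1 p.2.1 p.2.2)
      = ∫ p, py G p.1 p.2.1 p.2.2 ∂((volume : Measure (ℝ × ℝ × ℝ)).restrict (Omega L)) from rfl,
    measure_restrict_Omega, integral_prod _ hInt2]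
  have hinner : ∀ x : ℝ, (∫ q : ℝ × ℝ, py G x q.1 q.2) = 0 := by
    intro x
    have hcQ : Continuous fun q : ℝ × ℝ => py G x q.1 q.2 :=
      hGc.continuous.comp (continuous_const.prodMk continuous_id)
    have hsupp : ∀ q : ℝ × ℝ,
        q ∉ Set.Icc (-(M+1)) (M+1) ×ˢ Set.Icc (-(M+1)) (M+1) → py G x q.1 q.2 = 0 := by
      rintro q hq
      have : ¬(q.1 ∈ Set.Icc (-(M+1)) (M+1) ∧ q.2 ∈ Set.Icc (-(M+1)) (M+1)) := hq
      rcases not_and_or.mp this with h | h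
      · exact hQ' x q.1 q.2 (Or.inl (not_mem_Icc_abs h))
      · exact hQ' x q.1 q.2 (Or.inr (not_mem_Icc_abs h))
    have hci : Integrable (fun q : ℝ × ℝ => py G x q.1 q.2) :=
      hcQ.integrable_of_hasCompactSupport
        (HasCompactSupport.intro (isCompact_Icc.prod isCompact_Icc) hsupp)
    rw [show (volume : Measure (ℝ × ℝ)) = (volume : Measure ℝ).prod (volume : Measure ℝ) from
        (Measure.volume_eq_prod ℝ ℝ), integral_prod_symm _ (by
          rw [← Measure.volume_eq_prod]; exact hci)]
    have hz : ∀ z : ℝ, (∫ y : ℝ, py G x y z) = 0 := by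
      intro z
      have hcompl : ∀ y : ℝ, y ∉ Set.Ioc (-(M+2)) (M+2) → py G x y z = 0 := by
        intro y hy
        rw [Set.mem_Ioc, not_and_or] at hy
        refine hQ' x y z (Or.inl ?_)
        rcases hy with h | h <;> push_neg at h
        · exact le_abs.mpr (Or.inr (by linarith))
        · exact le_abs.mpr (Or.inl (by linarith))
      have hab : (-(M+2) : ℝ) ≤ M + 2 := by linarith
      calc (∫ y : ℝ, py G x y z)
          = ∫ y in Set.Ioc (-(M+2)) (M+2), py G x y z :=
            (setIntegral_eq_integral_of_forall_compl_eq_zero hcompl).symm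
        _ = ∫ y in (-(M+2))..(M+2), deriv (fun y' => G x y' z) y :=
            (intervalIntegral.integral_of_le hab).symm
        _ = G x (M+2) z - G x (-(M+2)) z := by
            refine intervalIntegral.integral_deriv_eq_sub (fun t _ => (diff_slice_y hG x z) t) ?_
            have : Continuous fun y : ℝ => py G x y z :=
              hGc.continuous.comp
                ((continuous_const.prodMk (continuous_id.prodMk continuous_const)))
            exact this.intervalIntegrable _ _
        _ = 0 := by
            rw [hQ x (M+2) z (Or.inl (by rw [abs_of_nonneg (by linarith)]; linarith)),
              hQ x (-(M+2)) z (Or.inl (by rw [abs_of_nonpos (by linarith)]; linarith))]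
            ring
    simp only [hz, integral_zero]
  simp only [hinner, integral_zero]

lemma integral_px_zero {L M : ℝ} (hL : 0 < L) {H : ℝ → ℝ → ℝ → ℝ}
    (hH : ContDiff ℝ (⊤ : ℕ∞) (UC H)) (hQ : Q M H)
    (h0 : ∀ y z, H 0 y z = 0) (hLb : ∀ y z, H L y z = 0) :
    ∫ p in Omega L, px H p.1 p.2.1 p.2.2 = 0 := by
  have hQ' : Q M (px H) := hQ.px'
  have hHc : ContDiff ℝ (⊤ : ℕ∞) (UC (px H)) := contDiff_px hH
  have hInt : IntegrableOn (UC (px H)) (Omega L) := integrableOn_Omega hHc.continuous hQ'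
  have hInt2 : Integrable (fun p : ℝ × ℝ × ℝ => px H p.1 p.2.1 p.2.2)
      (((volume : Measure ℝ).restrict (Set.Ioo 0 L)).prod (volume : Measure (ℝ × ℝ))) := by
    rw [← measure_restrict_Omega]; exact hInt
  rw [show (∫ p in Omega L, px H p.1 p.2.1 p.2.2)
      = ∫ p, px H p.1 p.2.1 p.2.2 ∂((volume : Measure (ℝ × ℝ × ℝ)).restrict (Omega L)) from rfl,
    measure_restrict_Omega, integral_prod_symm _ hInt2]
  have hinner : ∀ q : ℝ × ℝ, (∫ x in Set.Ioo 0 L, px H x q.1 q.2) = 0 := by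
    intro q
    calc (∫ x in Set.Ioo 0 L, px H x q.1 q.2)
        = ∫ x in Set.Ioc 0 L, px H x q.1 q.2 := (integral_Ioc_eq_integral_Ioo).symm
      _ = ∫ x in (0:ℝ)..L, deriv (fun x' => H x' q.1 q.2) x :=
          (intervalIntegral.integral_of_le hL.le).symm
      _ = H L q.1 q.2 - H 0 q.1 q.2 := by
          refine intervalIntegral.integral_deriv_eq_sub
            (fun t _ => (diff_slice_x hH q.1 q.2) t) ?_
          have : Continuous fun x : ℝ => px H x q.1 q.2 :=
            hHc.continuous.comp
              (continuous_id.prodMk (continuous_const.prodMk continuous_const))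
          exact this.intervalIntegrable _ _
      _ = 0 := by rw [h0, hLb]; ring
  simp only [hinner, integral_zero]

/-- The `y`-flux. -/
noncomputable def auxG (u : ℝ → ℝ → ℝ → ℝ) : ℝ → ℝ → ℝ → ℝ := fun x y z =>
  2 * (1 + x) * (u x y z * px u x y z * py (py (py u)) x y z
    - (py u x y z * px u x y z + u x y z * py (px u) x y z) * py (py u) x y z)

/-- The `x`-flux. -/
noncomputable def auxH (u : ℝ → ℝ → ℝ → ℝ) : ℝ → ℝ → ℝ → ℝ := fun x y z =>
  (1 + x) * (2 * (py u x y z) ^ 2 * py (py u) x y z + u x y z * (py (py u) x y z) ^ 2)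

lemma pointwise_id {u} (hu : ContDiff ℝ (⊤ : ℕ∞) (UC u)) (x y z : ℝ) :
    py (auxG u) x y z + px (auxH u) x y z
      = 2 * ((1 + x) * u x y z * px u x y z * py (py (py (py u))) x y z)
        - ((1 + x) * px u x y z - u x y z) * (py (py u) x y z) ^ 2
        + 2 * ((py u x y z) ^ 2 * py (py u) x y z)
        + 2 * ((1 + x) * (py u x y z) ^ 2 * px (py (py u)) x y z) := by
  have h1 := contDiff_px hu
  have h2 := contDiff_py hu
  have h3 := contDiff_py h2
  have h4 := contDiff_py h3
  have h5 := contDiff_py h1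
  have Hu := hasDerivAt_py hu x y z
  have Hux := hasDerivAt_py h1 x y z
  have Huy := hasDerivAt_py h2 x y z
  have Huyy := hasDerivAt_py h3 x y z
  have Huyyy := hasDerivAt_py h4 x y z
  have Huxy := hasDerivAt_py h5 x y z
  have Pu := hasDerivAt_px hu x y z
  have Puy := hasDerivAt_px h2 x y z
  have Puyy := hasDerivAt_px h3 x y z
  have hdG := (((Hu.mul Hux).mul Huyyy).sub
      (((Huy.mul Hux).add (Hu.mul Huxy)).mul Huyy)).const_mul (2 * (1 + x))
  have hdH := ((hasDerivAt_const x (1:ℝ)).add (hasDerivAt_id x)).mul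
      ((((Puy.pow 2).const_mul (2:ℝ)).mul Puyy).add (Pu.mul (Puyy.pow 2)))
  have e1 : py (auxG u) x y z = _ := hdG.deriv
  have e2 : px (auxH u) x y z = _ := hdH.deriv
  rw [e1, e2, clairaut hu, clairaut h2]
  simp only [Pi.mul_apply, Pi.add_apply, Pi.sub_apply, Pi.pow_apply, id_eq]
  push_cast
  ring

lemma contDiff_auxG {u} (hu : ContDiff ℝ (⊤ : ℕ∞) (UC u)) : ContDiff ℝ (⊤ : ℕ∞) (UC (auxG u)) := by
  have h1 := contDiff_px hu
  have h2 := contDiff_py hu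
  have h3 := contDiff_py h2
  have h4 := contDiff_py h3
  have h5 := contDiff_py h1
  exact (contDiff_const.mul (contDiff_const.add contDiff_fst)).mul
    (((hu.mul h1).mul h4).sub (((h2.mul h1).add (hu.mul h5)).mul h3))

lemma contDiff_auxH {u} (hu : ContDiff ℝ (⊤ : ℕ∞) (UC u)) : ContDiff ℝ (⊤ : ℕ∞) (UC (auxH u)) := by
  have h2 := contDiff_py hu
  have h3 := contDiff_py h2
  exact (contDiff_const.add contDiff_fst).mul
    (((contDiff_const.mul (h2.pow 2)).mul h3).add (hu.mul (h3.pow 2)))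

lemma Q_auxG {M : ℝ} {u} (hQ : Q M u) : Q (M + 3) (auxG u) := by
  intro x y z hc
  have hu0 : u x y z = 0 := (hQ.mono (by linarith)) x y z hc
  have hy0 : py u x y z = 0 := (hQ.py'.mono (by linarith)) x y z hc
  simp only [auxG]
  rw [hu0, hy0]; ring

lemma Q_auxH {M : ℝ} {u} (hQ : Q M u) : Q (M + 2) (auxH u) := by
  intro x y z hc
  have hu0 : u x y z = 0 := (hQ.mono (by linarith)) x y z hc
  have hy0 : py u x y z = 0 := (hQ.py'.mono (by linarith)) x y z hc
  simp only [auxH]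
  rw [hu0, hy0]; ring

lemma py_boundary {u} (a : ℝ) (h : ∀ y z, u a y z = 0) : ∀ y z, py u a y z = 0 := by
  intro y z
  have : (fun y' => u a y' z) = fun _ => (0 : ℝ) := funext fun y' => h y' z
  show deriv (fun y' => u a y' z) y = 0
  rw [this, deriv_const]

lemma auxH_boundary {u} (a : ℝ) (h : ∀ y z, u a y z = 0) : ∀ y z, auxH u a y z = 0 := by
  intro y z
  simp only [auxH]
  rw [h y z, py_boundary a h y z, py_boundary a (py_boundary a h) y z]
  ring

end EstVI

set_option maxHeartbeats 4000000 in
open EstVI in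
/-- Integration-by-parts identity (3.40) for the nonlinear term in Estimate VI. -/
theorem estimateVI_nonlinear_identity (L : ℝ) (hL : 0 < L) (u : ℝ → ℝ → ℝ → ℝ)
    (hu : Admissible L u) :
    2 * ∫ p in Omega L, (1 + p.1) * u p.1 p.2.1 p.2.2 * px u p.1 p.2.1 p.2.2 *
        py (py (py (py u))) p.1 p.2.1 p.2.2 =
      (∫ p in Omega L, ((1 + p.1) * px u p.1 p.2.1 p.2.2 - u p.1 p.2.1 p.2.2) *
          (py (py u) p.1 p.2.1 p.2.2) ^ 2) -
        2 * (∫ p in Omega L, (py u p.1 p.2.1 p.2.2) ^ 2 * py (py u) p.1 p.2.1 p.2.2) -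
        2 * (∫ p in Omega L, (1 + p.1) * (py u p.1 p.2.1 p.2.2) ^ 2 *
          px (py (py u)) p.1 p.2.1 p.2.2) := by
  obtain ⟨hsm, ⟨R, hRpos, hsupp⟩, hbc0, hbcL, -⟩ := hu
  have hsm' : ContDiff ℝ (⊤ : ℕ∞) (UC u) := hsm
  have hQu : Q R u := by
    intro x y z hc
    refine hsupp x y z ?_
    rcases hc with hc | hc
    · nlinarith [sq_abs y, sq_nonneg z, abs_nonneg y]
    · nlinarith [sq_abs z, sq_nonneg y, abs_nonneg z]
  have h1 := contDiff_px hsm'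
  have h2 := contDiff_py hsm'
  have h3 := contDiff_py h2
  have h4 := contDiff_py h3
  have h6 := contDiff_px h3
  have hsmB : ContDiff ℝ (⊤ : ℕ∞) fun p : ℝ × ℝ × ℝ => u p.1 p.2.1 p.2.2 := hsm'
  have h1B : ContDiff ℝ (⊤ : ℕ∞) fun p : ℝ × ℝ × ℝ => px u p.1 p.2.1 p.2.2 := h1
  have h2B : ContDiff ℝ (⊤ : ℕ∞) fun p : ℝ × ℝ × ℝ => py u p.1 p.2.1 p.2.2 := h2
  have h3B : ContDiff ℝ (⊤ : ℕ∞) fun p : ℝ × ℝ × ℝ => py (py u) p.1 p.2.1 p.2.2 := h3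
  have h4B : ContDiff ℝ (⊤ : ℕ∞) fun p : ℝ × ℝ × ℝ => py (py (py (py u))) p.1 p.2.1 p.2.2 :=
    contDiff_py h4
  have h6B : ContDiff ℝ (⊤ : ℕ∞) fun p : ℝ × ℝ × ℝ => px (py (py u)) p.1 p.2.1 p.2.2 := h6
  -- integrability of the four integrands
  have hI1 : IntegrableOn (fun p : ℝ × ℝ × ℝ => (1 + p.1) * u p.1 p.2.1 p.2.2 *
      px u p.1 p.2.1 p.2.2 * py (py (py (py u))) p.1 p.2.1 p.2.2) (Omega L) := by
    refine integrableOn_Omega (f := fun x y z => (1 + x) * u x y z * px u x y z *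
      py (py (py (py u))) x y z) ?_ (M := R) ?_
    · show Continuous fun p : ℝ × ℝ × ℝ => (1 + p.1) * u p.1 p.2.1 p.2.2 *
        px u p.1 p.2.1 p.2.2 * py (py (py (py u))) p.1 p.2.1 p.2.2
      exact ((((contDiff_const.add contDiff_fst).mul hsmB).mul h1B).mul h4B).continuous
    · intro x y z hc
      show (1 + x) * u x y z * px u x y z * py (py (py (py u))) x y z = 0
      rw [hQu x y z hc]; ring
  have hI2 : IntegrableOn (fun p : ℝ × ℝ × ℝ => ((1 + p.1) * px u p.1 p.2.1 p.2.2 -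
      u p.1 p.2.1 p.2.2) * (py (py u) p.1 p.2.1 p.2.2) ^ 2) (Omega L) := by
    refine integrableOn_Omega (f := fun x y z => ((1 + x) * px u x y z - u x y z) *
      (py (py u) x y z) ^ 2) ?_ (M := R + 1 + 1) ?_
    · show Continuous fun p : ℝ × ℝ × ℝ => ((1 + p.1) * px u p.1 p.2.1 p.2.2 -
        u p.1 p.2.1 p.2.2) * (py (py u) p.1 p.2.1 p.2.2) ^ 2
      exact ((((contDiff_const.add contDiff_fst).mul h1B).sub hsmB).mul (h3B.pow 2)).continuous
    · intro x y z hc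
      show ((1 + x) * px u x y z - u x y z) * (py (py u) x y z) ^ 2 = 0
      rw [hQu.py'.py' x y z hc]; ring
  have hI3 : IntegrableOn (fun p : ℝ × ℝ × ℝ => (py u p.1 p.2.1 p.2.2) ^ 2 *
      py (py u) p.1 p.2.1 p.2.2) (Omega L) := by
    refine integrableOn_Omega (f := fun x y z => (py u x y z) ^ 2 * py (py u) x y z)
      ?_ (M := R + 1) ?_
    · show Continuous fun p : ℝ × ℝ × ℝ => (py u p.1 p.2.1 p.2.2) ^ 2 *
        py (py u) p.1 p.2.1 p.2.2
      exact ((h2B.pow 2).mul h3B).continuous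
    · intro x y z hc
      show (py u x y z) ^ 2 * py (py u) x y z = 0
      rw [hQu.py' x y z hc]; ring
  have hI4 : IntegrableOn (fun p : ℝ × ℝ × ℝ => (1 + p.1) * (py u p.1 p.2.1 p.2.2) ^ 2 *
      px (py (py u)) p.1 p.2.1 p.2.2) (Omega L) := by
    refine integrableOn_Omega (f := fun x y z => (1 + x) * (py u x y z) ^ 2 *
      px (py (py u)) x y z) ?_ (M := R + 1) ?_
    · show Continuous fun p : ℝ × ℝ × ℝ => (1 + p.1) * (py u p.1 p.2.1 p.2.2) ^ 2 *
        px (py (py u)) p.1 p.2.1 p.2.2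
      exact (((contDiff_const.add contDiff_fst).mul (h2B.pow 2)).mul h6B).continuous
    · intro x y z hc
      show (1 + x) * (py u x y z) ^ 2 * px (py (py u)) x y z = 0
      rw [hQu.py' x y z hc]; ring
  -- the divergence integrates to zero
  have hGsm := contDiff_auxG hsm'
  have hHsm := contDiff_auxH hsm'
  have hGQ : Q (R + 3) (auxG u) := Q_auxG hQu
  have hHQ : Q (R + 2) (auxH u) := Q_auxH hQu
  have hzero1 : ∫ p in Omega L, py (auxG u) p.1 p.2.1 p.2.2 = 0 :=
    integral_py_zero (by linarith) hGsm hGQ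
  have hzero2 : ∫ p in Omega L, px (auxH u) p.1 p.2.1 p.2.2 = 0 :=
    integral_px_zero hL hHsm hHQ (auxH_boundary 0 hbc0) (auxH_boundary L hbcL)
  have hIG : IntegrableOn (fun p : ℝ × ℝ × ℝ => py (auxG u) p.1 p.2.1 p.2.2) (Omega L) :=
    integrableOn_Omega (contDiff_py hGsm).continuous hGQ.py'
  have hIH : IntegrableOn (fun p : ℝ × ℝ × ℝ => px (auxH u) p.1 p.2.1 p.2.2) (Omega L) :=
    integrableOn_Omega (contDiff_px hHsm).continuous hHQ.px'
  have hsum : ∫ p in Omega L, (py (auxG u) p.1 p.2.1 p.2.2 + px (auxH u) p.1 p.2.1 p.2.2)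
      = 0 := by
    rw [integral_add hIG hIH, hzero1, hzero2]; ring
  have hptw : (fun p : ℝ × ℝ × ℝ => py (auxG u) p.1 p.2.1 p.2.2 + px (auxH u) p.1 p.2.1 p.2.2)
      = fun p : ℝ × ℝ × ℝ =>
        2 * ((1 + p.1) * u p.1 p.2.1 p.2.2 * px u p.1 p.2.1 p.2.2 *
            py (py (py (py u))) p.1 p.2.1 p.2.2)
          - ((1 + p.1) * px u p.1 p.2.1 p.2.2 - u p.1 p.2.1 p.2.2) *
            (py (py u) p.1 p.2.1 p.2.2) ^ 2
          + 2 * ((py u p.1 p.2.1 p.2.2) ^ 2 * py (py u) p.1 p.2.1 p.2.2)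
          + 2 * ((1 + p.1) * (py u p.1 p.2.1 p.2.2) ^ 2 *
            px (py (py u)) p.1 p.2.1 p.2.2) :=
    funext fun p => pointwise_id hsm' p.1 p.2.1 p.2.2
  rw [hptw] at hsum
  set T1 : (ℝ × ℝ × ℝ) → ℝ := fun p => (1 + p.1) * u p.1 p.2.1 p.2.2 *
      px u p.1 p.2.1 p.2.2 * py (py (py (py u))) p.1 p.2.1 p.2.2 with hT1
  set T2 : (ℝ × ℝ × ℝ) → ℝ := fun p => ((1 + p.1) * px u p.1 p.2.1 p.2.2 -
      u p.1 p.2.1 p.2.2) * (py (py u) p.1 p.2.1 p.2.2) ^ 2 with hT2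
  set T3 : (ℝ × ℝ × ℝ) → ℝ := fun p => (py u p.1 p.2.1 p.2.2) ^ 2 *
      py (py u) p.1 p.2.1 p.2.2 with hT3
  set T4 : (ℝ × ℝ × ℝ) → ℝ := fun p => (1 + p.1) * (py u p.1 p.2.1 p.2.2) ^ 2 *
      px (py (py u)) p.1 p.2.1 p.2.2 with hT4
  have hJ1 : Integrable (fun p : ℝ × ℝ × ℝ => 2 * T1 p) (volume.restrict (Omega L)) :=
    hI1.const_mul 2
  have hJ3 : Integrable (fun p : ℝ × ℝ × ℝ => 2 * T3 p) (volume.restrict (Omega L)) :=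
    hI3.const_mul 2
  have hJ4 : Integrable (fun p : ℝ × ℝ × ℝ => 2 * T4 p) (volume.restrict (Omega L)) :=
    hI4.const_mul 2
  have hJ12 : Integrable (fun p : ℝ × ℝ × ℝ => 2 * T1 p - T2 p) (volume.restrict (Omega L)) :=
    hJ1.sub hI2
  have hJ123 : Integrable (fun p : ℝ × ℝ × ℝ => 2 * T1 p - T2 p + 2 * T3 p)
      (volume.restrict (Omega L)) := hJ12.add hJ3
  have hsum' : ∫ p in Omega L, (2 * T1 p - T2 p + 2 * T3 p + 2 * T4 p) = 0 := hsum
  have e1 : ∫ p in Omega L, (2 * T1 p - T2 p + 2 * T3 p + 2 * T4 p)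
      = (∫ p in Omega L, (2 * T1 p - T2 p + 2 * T3 p)) + ∫ p in Omega L, 2 * T4 p :=
    integral_add hJ123 hJ4
  have e2 : ∫ p in Omega L, (2 * T1 p - T2 p + 2 * T3 p)
      = (∫ p in Omega L, (2 * T1 p - T2 p)) + ∫ p in Omega L, 2 * T3 p :=
    integral_add hJ12 hJ3
  have e3 : ∫ p in Omega L, (2 * T1 p - T2 p)
      = (∫ p in Omega L, 2 * T1 p) - ∫ p in Omega L, T2 p := integral_sub hJ1 hI2
  have e4 : ∫ p in Omega L, 2 * T1 p = 2 * ∫ p in Omega L, T1 p := integral_const_mul 2 T1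
  have e5 : ∫ p in Omega L, 2 * T3 p = 2 * ∫ p in Omega L, T3 p := integral_const_mul 2 T3
  have e6 : ∫ p in Omega L, 2 * T4 p = 2 * ∫ p in Omega L, T4 p := integral_const_mul 2 T4
  have goalT : 2 * (∫ p in Omega L, T1 p) = (∫ p in Omega L, T2 p)
      - 2 * (∫ p in Omega L, T3 p) - 2 * (∫ p in Omega L, T4 p) := by
    linarith [hsum', e1, e2, e3, e4, e5, e6]
  exact goalT
end

section
/- Let ε ∈ ℝ and let u : ℝ → ℝ be four times continuously differentiable on [0,1] with u(0) = u''(0) = u(1) = u'(1) = 0. Set g(x) = u'''(x) + u(x)·u'(x) + ε·u''''(x) and h(x) = −u'(0) + (1/2)∫₀¹ u(ξ)² dξ − (1/2)·u(x)² + ∫₀¹ ξ·g(ξ) dξ − ∫ₓ¹ g(ξ) dξ. Then for every x ∈ [0,1]: u''(x) + ε·u'''(x) = ε·u''(1) + h(x). -/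
/-!
Both integrals in `h` are evaluated through explicit primitives:
`u'' + u²/2 + ε u'''` is a primitive of `g`, which computes `∫ₓ¹ g`, and
`ξ u'' - u' + ξ u²/2 + ε (ξ u''' - u'')` is a primitive of `ξ g + u²/2`, which computes
`∫₀¹ ξ g` (integration by parts, made explicit). Substituting both into `h x`, every boundary
term cancels except those killed by `u'(1) = u''(0) = 0`.
-/

open Set intervalIntegral

theorem integral_eq_sub_of_hasDerivWithinAt_of_Icc_subset {E : Type*} [NormedAddCommGroup E]
    [NormedSpace ℝ E] [CompleteSpace E] {f f' : ℝ → E} {s : Set ℝ} {a b : ℝ}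
    (hab : a ≤ b) (hs : Icc a b ⊆ s) (hf : ∀ x ∈ s, HasDerivWithinAt f (f' x) s x)
    (hf' : ContinuousOn f' s) :
    ∫ x in a..b, f' x = f b - f a :=
  integral_eq_sub_of_hasDerivAt_of_le hab
    (fun x hx => (hf x (hs hx)).continuousWithinAt.mono hs)
    (fun x hx => (hf x (hs (Ioo_subset_Icc_self hx))).hasDerivAt
      (Filter.mem_of_superset (Icc_mem_nhds hx.1 hx.2) hs))
    ((hf'.mono hs).intervalIntegrable_of_Icc hab)

def stationaryForcing (ε : ℝ) (u u₁ u₃ u₄ : ℝ → ℝ) (x : ℝ) : ℝ :=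
  u₃ x + u x * u₁ x + ε * u₄ x

section Primitives

variable {s : Set ℝ} {ε y : ℝ} {u u₁ u₂ u₃ u₄ : ℝ → ℝ}

theorem hasDerivWithinAt_forcing_primitive (hd1 : HasDerivWithinAt u (u₁ y) s y)
    (hd3 : HasDerivWithinAt u₂ (u₃ y) s y) (hd4 : HasDerivWithinAt u₃ (u₄ y) s y) :
    HasDerivWithinAt (fun x => u₂ x + u x ^ 2 / 2 + ε * u₃ x)
      (stationaryForcing ε u u₁ u₃ u₄ y) s y := by
  refine ((hd3.add ((hd1.pow 2).div_const 2)).add (hd4.const_mul ε)).congr_deriv ?_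
  unfold stationaryForcing
  ring

theorem hasDerivWithinAt_moment_primitive (hd1 : HasDerivWithinAt u (u₁ y) s y)
    (hd2 : HasDerivWithinAt u₁ (u₂ y) s y) (hd3 : HasDerivWithinAt u₂ (u₃ y) s y)
    (hd4 : HasDerivWithinAt u₃ (u₄ y) s y) :
    HasDerivWithinAt (fun x => x * u₂ x - u₁ x + x * u x ^ 2 / 2 + ε * (x * u₃ x - u₂ x))
      (y * stationaryForcing ε u u₁ u₃ u₄ y + u y ^ 2 / 2) s y := by
  have hid : HasDerivWithinAt (fun x : ℝ => x) 1 s y := hasDerivWithinAt_id y s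
  refine ((((hid.mul hd3).sub hd2).add ((hid.mul (hd1.pow 2)).div_const 2)).add
    (((hid.mul hd4).sub hd3).const_mul ε)).congr_deriv ?_
  simp only [stationaryForcing, Pi.pow_apply]
  ring

end Primitives

theorem estimateVII_identity_349_general (ε : ℝ) (u u₁ u₂ u₃ u₄ : ℝ → ℝ)
    (hd1 : ∀ x ∈ Set.Icc (0 : ℝ) 1, HasDerivWithinAt u (u₁ x) (Set.Icc (0 : ℝ) 1) x)
    (hd2 : ∀ x ∈ Set.Icc (0 : ℝ) 1, HasDerivWithinAt u₁ (u₂ x) (Set.Icc (0 : ℝ) 1) x)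
    (hd3 : ∀ x ∈ Set.Icc (0 : ℝ) 1, HasDerivWithinAt u₂ (u₃ x) (Set.Icc (0 : ℝ) 1) x)
    (hd4 : ∀ x ∈ Set.Icc (0 : ℝ) 1, HasDerivWithinAt u₃ (u₄ x) (Set.Icc (0 : ℝ) 1) x)
    (hc : ContinuousOn u₄ (Set.Icc (0 : ℝ) 1))
    (hu2 : u₂ 0 = 0) (hux1 : u₁ 1 = 0)
    (g : ℝ → ℝ) (hg : ∀ x, g x = u₃ x + u x * u₁ x + ε * u₄ x)
    (h : ℝ → ℝ)
    (hh : ∀ x, h x = -u₁ 0 + (1 / 2) * (∫ ξ in (0 : ℝ)..1, (u ξ) ^ 2) -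
      (1 / 2) * (u x) ^ 2 + (∫ ξ in (0 : ℝ)..1, ξ * g ξ) - ∫ ξ in x..1, g ξ) :
    ∀ x ∈ Set.Icc (0 : ℝ) 1, u₂ x + ε * u₃ x = ε * u₂ 1 + h x := by
  intro x hx
  obtain rfl : g = stationaryForcing ε u u₁ u₃ u₄ := funext hg
  have hcu : ContinuousOn u (Icc 0 1) := fun y hy => (hd1 y hy).continuousWithinAt
  have hcu₁ : ContinuousOn u₁ (Icc 0 1) := fun y hy => (hd2 y hy).continuousWithinAt
  have hcu₃ : ContinuousOn u₃ (Icc 0 1) := fun y hy => (hd4 y hy).continuousWithinAt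
  have hcg : ContinuousOn (stationaryForcing ε u u₁ u₃ u₄) (Icc 0 1) :=
    (hcu₃.add (hcu.mul hcu₁)).add (hc.const_smul ε)
  have hforcing := integral_eq_sub_of_hasDerivWithinAt_of_Icc_subset hx.2
    (Icc_subset_Icc hx.1 le_rfl)
    (fun y hy => hasDerivWithinAt_forcing_primitive (hd1 y hy) (hd3 y hy) (hd4 y hy)) hcg
  have hcm : ContinuousOn (fun ξ => ξ * stationaryForcing ε u u₁ u₃ u₄ ξ) (Icc 0 1) :=
    continuousOn_id.mul hcg
  have hcsq : ContinuousOn (fun ξ => u ξ ^ 2 / 2) (Icc 0 1) := (hcu.pow 2).div_const 2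
  have hmoment := integral_eq_sub_of_hasDerivWithinAt_of_Icc_subset zero_le_one subset_rfl
    (fun y hy => hasDerivWithinAt_moment_primitive (hd1 y hy) (hd2 y hy) (hd3 y hy) (hd4 y hy))
    (hcm.add hcsq)
  rw [integral_add (hcm.intervalIntegrable_of_Icc zero_le_one)
    (hcsq.intervalIntegrable_of_Icc zero_le_one), integral_div] at hmoment
  rw [hh x, hforcing]
  linear_combination hux1 - hmoment - ε * hu2

/-- Identity (3.49) in Estimate VII of the paper: combining the two integrated forms of
the stationary equation `u''' + u u' + ε u'''' = g`. Here `u₁, u₂, u₃, u₄` are the first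
four derivatives of `u` on `[0,1]`. -/
theorem estimateVII_identity_349 (ε : ℝ) (u u₁ u₂ u₃ u₄ : ℝ → ℝ)
    (hd1 : ∀ x ∈ Set.Icc (0 : ℝ) 1, HasDerivWithinAt u (u₁ x) (Set.Icc (0 : ℝ) 1) x)
    (hd2 : ∀ x ∈ Set.Icc (0 : ℝ) 1, HasDerivWithinAt u₁ (u₂ x) (Set.Icc (0 : ℝ) 1) x)
    (hd3 : ∀ x ∈ Set.Icc (0 : ℝ) 1, HasDerivWithinAt u₂ (u₃ x) (Set.Icc (0 : ℝ) 1) x)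
    (hd4 : ∀ x ∈ Set.Icc (0 : ℝ) 1, HasDerivWithinAt u₃ (u₄ x) (Set.Icc (0 : ℝ) 1) x)
    (hc : ContinuousOn u₄ (Set.Icc (0 : ℝ) 1))
    (hu0 : u 0 = 0) (hu2 : u₂ 0 = 0) (hu1 : u 1 = 0) (hux1 : u₁ 1 = 0)
    (g : ℝ → ℝ) (hg : ∀ x, g x = u₃ x + u x * u₁ x + ε * u₄ x)
    (h : ℝ → ℝ)
    (hh : ∀ x, h x = -u₁ 0 + (1 / 2) * (∫ ξ in (0 : ℝ)..1, (u ξ) ^ 2) -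
      (1 / 2) * (u x) ^ 2 + (∫ ξ in (0 : ℝ)..1, ξ * g ξ) - ∫ ξ in x..1, g ξ) :
    ∀ x ∈ Set.Icc (0 : ℝ) 1, u₂ x + ε * u₃ x = ε * u₂ 1 + h x :=
  estimateVII_identity_349_general ε u u₁ u₂ u₃ u₄ hd1 hd2 hd3 hd4 hc hu2 hux1 g hg h hh
end

section
/- Let ε > 0 and let u : ℝ → ℝ be four times continuously differentiable on [0,1] with u(0) = u''(0) = u(1) = u'(1) = 0. Set g(x) = u'''(x) + u(x)·u'(x) + ε·u''''(x) and h(x) = −u'(0) + (1/2)∫₀¹ u(ξ)² dξ − (1/2)·u(x)² + ∫₀¹ ξ·g(ξ) dξ − ∫ₓ¹ g(ξ) dξ. Then ∫₀¹ (u''(x))² dx + (ε/2)·(u''(1))² ≤ 8ε·(u'(0))² + ∫₀¹ (h(x))² dx. -/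
/-!
On `[0,1]` one has `h = u'' + ε u''' - ε u''(1)`: `G = u'' + u²/2 + ε u'''` is an antiderivative
of `g`, integration by parts gives `∫₀¹ ξ g - ∫ₓ¹ g = G x - ∫₀¹ G`, and `∫₀¹ G` involves only
`∫₀¹ u²` and boundary values of `u'` and `u''`.
With `v = u''`, Young's inequality `h² ≥ 2 h v - v²` integrates to
`∫ h² ≥ ∫ v² + ε v(1)² + 2 ε v(1) u'(0)`, because `2 h v - 2 v²` is the derivative of
`ε v² - 2 ε v(1) u'`. The claim then reduces to `ε v(1)²/2 + 2 ε v(1) u'(0) + 8 ε u'(0)² ≥ 0`.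
-/

open Set intervalIntegral
open MeasureTheory (volume)

section

variable {a b : ℝ}

theorem integral_eq_sub_of_hasDerivWithinAt_Icc {f f' : ℝ → ℝ} (hab : a ≤ b)
    (hf : ∀ x ∈ Icc a b, HasDerivWithinAt f (f' x) (Icc a b) x)
    (hf' : IntervalIntegrable f' volume a b) :
    ∫ x in a..b, f' x = f b - f a :=
  integral_eq_sub_of_hasDerivAt_of_le hab (fun x hx ↦ (hf x hx).continuousWithinAt)
    (fun x hx ↦ (hf x (Ioo_subset_Icc_self hx)).hasDerivAt (Icc_mem_nhds hx.1 hx.2)) hf'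

theorem integral_sq_add_le_of_hasDerivWithinAt {ε : ℝ} (hε : 0 ≤ ε) {U V V' : ℝ → ℝ}
    (hab : a ≤ b) (hU : ∀ x ∈ Icc a b, HasDerivWithinAt U (V x) (Icc a b) x)
    (hV : ∀ x ∈ Icc a b, HasDerivWithinAt V (V' x) (Icc a b) x)
    (hV' : ContinuousOn V' (Icc a b)) (hVa : V a = 0) (hUb : U b = 0) :
    (∫ x in a..b, V x ^ 2) + ε / 2 * V b ^ 2 ≤
      8 * ε * U a ^ 2 + ∫ x in a..b, (V x + ε * V' x - ε * V b) ^ 2 := by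
  have hVc : ContinuousOn V (Icc a b) := fun x hx ↦ (hV x hx).continuousWithinAt
  set F' : ℝ → ℝ := fun x ↦ 2 * ε * (V x * V' x) - 2 * ε * V b * V x
  have hF : ∀ x ∈ Icc a b, HasDerivWithinAt (fun x ↦ ε * (V x * V x) - 2 * ε * V b * U x)
      (F' x) (Icc a b) x := fun x hx ↦
    ((((hV x hx).mul (hV x hx)).const_mul ε).sub ((hU x hx).const_mul (2 * ε * V b))).congr_deriv
      (by ring)
  have hint {f : ℝ → ℝ} (hf : ContinuousOn f (Icc a b)) : IntervalIntegrable f volume a b :=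
    hf.intervalIntegrable_of_Icc hab
  have hF'c : ContinuousOn F' (Icc a b) := by fun_prop
  have hFint : ∫ x in a..b, F' x = ε * V b ^ 2 + 2 * ε * V b * U a := by
    rw [integral_eq_sub_of_hasDerivWithinAt_Icc hab hF (hint hF'c), hVa, hUb]
    ring
  have hlower : ∫ x in a..b, (V x ^ 2 + F' x) ≤ ∫ x in a..b, (V x + ε * V' x - ε * V b) ^ 2 := by
    refine integral_mono_on hab (hint (by fun_prop)) (hint (by fun_prop)) fun x _ ↦ ?_
    have : (V x + ε * V' x - ε * V b) ^ 2 = V x ^ 2 + F' x + (ε * V' x - ε * V b) ^ 2 := by ring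
    linarith [sq_nonneg (ε * V' x - ε * V b)]
  have hsplit : ∫ x in a..b, (V x ^ 2 + F' x) = (∫ x in a..b, V x ^ 2) + ∫ x in a..b, F' x :=
    integral_add (hint (by fun_prop)) (hint hF'c)
  linarith [mul_nonneg hε (sq_nonneg (V b + 2 * U a)), mul_nonneg hε (sq_nonneg (U a))]

end

theorem integral_id_mul_sub_integral_eq {G g : ℝ → ℝ}
    (hG : ∀ x ∈ Icc (0 : ℝ) 1, HasDerivWithinAt G (g x) (Icc 0 1) x)
    (hg : ContinuousOn g (Icc 0 1)) {x : ℝ} (hx : x ∈ Icc (0 : ℝ) 1) :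
    (∫ ξ in (0 : ℝ)..1, ξ * g ξ) - ∫ ξ in x..1, g ξ = G x - ∫ ξ in (0 : ℝ)..1, G ξ := by
  have hsub : Icc x 1 ⊆ Icc 0 1 := Icc_subset_Icc_left hx.1
  have htail : ∫ ξ in x..1, g ξ = G 1 - G x :=
    integral_eq_sub_of_hasDerivWithinAt_Icc hx.2 (fun y hy ↦ (hG y (hsub hy)).mono hsub)
      ((hg.mono hsub).intervalIntegrable_of_Icc hx.2)
  have hparts : ∫ ξ in (0 : ℝ)..1, ξ * g ξ = 1 * G 1 - 0 * G 0 - ∫ ξ in (0 : ℝ)..1, 1 * G ξ := by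
    rw [← uIcc_of_le zero_le_one] at hG hg
    exact integral_mul_deriv_eq_deriv_mul_of_hasDerivWithinAt
      (fun y _ ↦ hasDerivWithinAt_id y _) hG intervalIntegrable_const
      hg.intervalIntegrable
  rw [htail, hparts]
  simp

section

variable {ε : ℝ} {u u₁ u₂ u₃ u₄ g h : ℝ → ℝ}

theorem estimateVII_h_eqOn
    (hd1 : ∀ x ∈ Icc (0 : ℝ) 1, HasDerivWithinAt u (u₁ x) (Icc (0 : ℝ) 1) x)
    (hd2 : ∀ x ∈ Icc (0 : ℝ) 1, HasDerivWithinAt u₁ (u₂ x) (Icc (0 : ℝ) 1) x)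
    (hd3 : ∀ x ∈ Icc (0 : ℝ) 1, HasDerivWithinAt u₂ (u₃ x) (Icc (0 : ℝ) 1) x)
    (hd4 : ∀ x ∈ Icc (0 : ℝ) 1, HasDerivWithinAt u₃ (u₄ x) (Icc (0 : ℝ) 1) x)
    (hc : ContinuousOn u₄ (Icc (0 : ℝ) 1)) (hu2 : u₂ 0 = 0) (hux1 : u₁ 1 = 0)
    (hg : ∀ x, g x = u₃ x + u x * u₁ x + ε * u₄ x)
    (hh : ∀ x, h x = -u₁ 0 + (1 / 2) * (∫ ξ in (0 : ℝ)..1, (u ξ) ^ 2) -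
      (1 / 2) * (u x) ^ 2 + (∫ ξ in (0 : ℝ)..1, ξ * g ξ) - ∫ ξ in x..1, g ξ) :
    EqOn h (fun x ↦ u₂ x + ε * u₃ x - ε * u₂ 1) (Icc 0 1) := by
  have cu : ContinuousOn u (Icc 0 1) := fun x hx ↦ (hd1 x hx).continuousWithinAt
  have cu₁ : ContinuousOn u₁ (Icc 0 1) := fun x hx ↦ (hd2 x hx).continuousWithinAt
  have cu₂ : ContinuousOn u₂ (Icc 0 1) := fun x hx ↦ (hd3 x hx).continuousWithinAt
  have cu₃ : ContinuousOn u₃ (Icc 0 1) := fun x hx ↦ (hd4 x hx).continuousWithinAt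
  have cg : ContinuousOn g (Icc 0 1) :=
    (show ContinuousOn (fun x ↦ u₃ x + u x * u₁ x + ε * u₄ x) (Icc 0 1) by fun_prop).congr
      fun x _ ↦ hg x
  set G : ℝ → ℝ := fun x ↦ u₂ x + u x ^ 2 / 2 + ε * u₃ x
  have hG : ∀ x ∈ Icc (0 : ℝ) 1, HasDerivWithinAt G (g x) (Icc 0 1) x := fun x hx ↦
    (((hd3 x hx).add (((hd1 x hx).pow 2).div_const 2)).add ((hd4 x hx).const_mul ε)).congr_deriv
      (by rw [hg]; ring)
  have hint {f : ℝ → ℝ} (hf : ContinuousOn f (Icc 0 1)) : IntervalIntegrable f volume 0 1 :=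
    hf.intervalIntegrable_of_Icc zero_le_one
  have hGint : ∫ x in (0 : ℝ)..1, G x =
      -u₁ 0 + (1 / 2) * (∫ ξ in (0 : ℝ)..1, (u ξ) ^ 2) + ε * u₂ 1 := by
    rw [integral_add, integral_add, integral_div, integral_const_mul,
      integral_eq_sub_of_hasDerivWithinAt_Icc zero_le_one hd2 (hint cu₂),
      integral_eq_sub_of_hasDerivWithinAt_Icc zero_le_one hd3 (hint cu₃), hu2, hux1]
    · ring
    all_goals exact hint (by fun_prop)
  intro x hx
  rw [hh, add_sub_assoc, integral_id_mul_sub_integral_eq hG cg hx, hGint]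
  ring

end

theorem estimateVII_final_inequality_general (ε : ℝ) (hε : 0 < ε) (u u₁ u₂ u₃ u₄ : ℝ → ℝ)
    (hd1 : ∀ x ∈ Set.Icc (0 : ℝ) 1, HasDerivWithinAt u (u₁ x) (Set.Icc (0 : ℝ) 1) x)
    (hd2 : ∀ x ∈ Set.Icc (0 : ℝ) 1, HasDerivWithinAt u₁ (u₂ x) (Set.Icc (0 : ℝ) 1) x)
    (hd3 : ∀ x ∈ Set.Icc (0 : ℝ) 1, HasDerivWithinAt u₂ (u₃ x) (Set.Icc (0 : ℝ) 1) x)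
    (hd4 : ∀ x ∈ Set.Icc (0 : ℝ) 1, HasDerivWithinAt u₃ (u₄ x) (Set.Icc (0 : ℝ) 1) x)
    (hc : ContinuousOn u₄ (Set.Icc (0 : ℝ) 1))
    (hu2 : u₂ 0 = 0) (hux1 : u₁ 1 = 0)
    (g : ℝ → ℝ) (hg : ∀ x, g x = u₃ x + u x * u₁ x + ε * u₄ x)
    (h : ℝ → ℝ)
    (hh : ∀ x, h x = -u₁ 0 + (1 / 2) * (∫ ξ in (0 : ℝ)..1, (u ξ) ^ 2) -
      (1 / 2) * (u x) ^ 2 + (∫ ξ in (0 : ℝ)..1, ξ * g ξ) - ∫ ξ in x..1, g ξ) :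
    (∫ x in (0 : ℝ)..1, (u₂ x) ^ 2) + (ε / 2) * (u₂ 1) ^ 2 ≤
      8 * ε * (u₁ 0) ^ 2 + ∫ x in (0 : ℝ)..1, (h x) ^ 2 := by
  have hφ := estimateVII_h_eqOn hd1 hd2 hd3 hd4 hc hu2 hux1 hg hh
  rw [integral_congr fun x hx ↦ congrArg (· ^ 2) (hφ (by rwa [uIcc_of_le zero_le_one] at hx))]
  exact integral_sq_add_le_of_hasDerivWithinAt hε.le zero_le_one hd2 hd3
    (fun x hx ↦ (hd4 x hx).continuousWithinAt) hu2 hux1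

/-- Final inequality of Estimate VII of the paper: the `L²(0,1)` bound for `u''` in terms
of `h` and `u'(0)`. Here `u₁, u₂, u₃, u₄` are the first four derivatives of `u` on `[0,1]`. -/
theorem estimateVII_final_inequality (ε : ℝ) (hε : 0 < ε) (u u₁ u₂ u₃ u₄ : ℝ → ℝ)
    (hd1 : ∀ x ∈ Set.Icc (0 : ℝ) 1, HasDerivWithinAt u (u₁ x) (Set.Icc (0 : ℝ) 1) x)
    (hd2 : ∀ x ∈ Set.Icc (0 : ℝ) 1, HasDerivWithinAt u₁ (u₂ x) (Set.Icc (0 : ℝ) 1) x)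
    (hd3 : ∀ x ∈ Set.Icc (0 : ℝ) 1, HasDerivWithinAt u₂ (u₃ x) (Set.Icc (0 : ℝ) 1) x)
    (hd4 : ∀ x ∈ Set.Icc (0 : ℝ) 1, HasDerivWithinAt u₃ (u₄ x) (Set.Icc (0 : ℝ) 1) x)
    (hc : ContinuousOn u₄ (Set.Icc (0 : ℝ) 1))
    (hu0 : u 0 = 0) (hu2 : u₂ 0 = 0) (hu1 : u 1 = 0) (hux1 : u₁ 1 = 0)
    (g : ℝ → ℝ) (hg : ∀ x, g x = u₃ x + u x * u₁ x + ε * u₄ x)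
    (h : ℝ → ℝ)
    (hh : ∀ x, h x = -u₁ 0 + (1 / 2) * (∫ ξ in (0 : ℝ)..1, (u ξ) ^ 2) -
      (1 / 2) * (u x) ^ 2 + (∫ ξ in (0 : ℝ)..1, ξ * g ξ) - ∫ ξ in x..1, g ξ) :
    (∫ x in (0 : ℝ)..1, (u₂ x) ^ 2) + (ε / 2) * (u₂ 1) ^ 2 ≤
      8 * ε * (u₁ 0) ^ 2 + ∫ x in (0 : ℝ)..1, (h x) ^ 2 :=
  estimateVII_final_inequality_general ε hε u u₁ u₂ u₃ u₄ hd1 hd2 hd3 hd4 hc hu2 hux1 g hg h hh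
end
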